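/- arXiv:2602.05725 — 12 statements merged into one kernel-verified Lean document; each statement's English description precedes it below -/
import Mathlib

section
/- Let K ≥ 2. For every γ ∈ ℝ, the noiseless cross-entropy loss of the linear softmax associative memory model at the weight matrix W = γ · Ẽ Eᵀ equals L(W) = log(1 + (K−1)·exp(−γ)). Consequently L(γ · Ẽ Eᵀ) tends to 0 as γ → ∞. -/
open Matrix Real Filter

/-! By orthonormality the score matrix `Ẽᵀ (γ Ẽ Eᵀ) E` is `γ • 1`, so every diagonal softmax
probability equals `exp γ / (exp γ + (K - 1)) = (1 + (K - 1) exp (-γ))⁻¹`, independently of the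
query; as the frequencies sum to one, the loss is minus the logarithm of this common value. -/

/-- Predicted softmax probability `p̂_{i|j}(W)` of the linear softmax associative memory model. -/
noncomputable def predProb {K : ℕ} (E Et W : Matrix (Fin K) (Fin K) ℝ) (i j : Fin K) : ℝ :=
  Real.exp ((Etᵀ * W * E) i j) / ∑ l, Real.exp ((Etᵀ * W * E) l j)

/-- Noiseless cross-entropy loss `L(W) = −∑_j p_j log p̂_{j|j}(W)`. -/
noncomputable def lossNoiseless {K : ℕ} (E Et : Matrix (Fin K) (Fin K) ℝ) (p : Fin K → ℝ)
    (W : Matrix (Fin K) (Fin K) ℝ) : ℝ :=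
  -∑ j, p j * Real.log (predProb E Et W j j)

theorem Matrix.transpose_mul_smul_mul_transpose_mul {m n R : Type*} [Fintype m] [Fintype n]
    [DecidableEq n] [CommRing R] {E Et : Matrix m n R} (hE : Eᵀ * E = 1) (hEt : Etᵀ * Et = 1)
    (γ : R) : Etᵀ * (γ • (Et * Eᵀ)) * E = γ • (1 : Matrix n n R) := by
  rw [Matrix.mul_smul, Matrix.smul_mul, Matrix.mul_assoc, Matrix.mul_assoc, hE, Matrix.mul_one,
    hEt]

theorem sum_exp_smul_one_apply {n : Type*} [Fintype n] [DecidableEq n] (γ : ℝ) (j : n) :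
    ∑ l, Real.exp ((γ • (1 : Matrix n n ℝ)) l j) = Real.exp γ + (Fintype.card n - 1) := by
  have hsplit : ∀ l, Real.exp ((γ • (1 : Matrix n n ℝ)) l j)
      = (if l = j then Real.exp γ - 1 else 0) + 1 := by
    intro l
    by_cases hl : l = j <;> simp [hl]
  simp only [hsplit, Finset.sum_add_distrib, Finset.sum_ite_eq', Finset.mem_univ, if_true,
    Finset.sum_const, Finset.card_univ, nsmul_eq_mul, mul_one]
  ring

theorem predProb_self_of_score_eq_smul_one {K : ℕ} {E Et W : Matrix (Fin K) (Fin K) ℝ} {γ : ℝ}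
    (hW : Etᵀ * W * E = γ • 1) (j : Fin K) :
    predProb E Et W j j = (1 + (K - 1) * Real.exp (-γ))⁻¹ := by
  rw [predProb, hW, sum_exp_smul_one_apply, Fintype.card_fin]
  simp only [Matrix.smul_apply, one_apply_eq, smul_eq_mul, mul_one, exp_neg]
  field_simp

theorem lossNoiseless_of_predProb_self_eq {K : ℕ} {E Et W : Matrix (Fin K) (Fin K) ℝ}
    {p : Fin K → ℝ} (hp1 : ∑ j, p j = 1) {q : ℝ} (hq : ∀ j, predProb E Et W j j = q) :
    lossNoiseless E Et p W = -Real.log q := by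
  simp only [lossNoiseless, hq, ← Finset.sum_mul, hp1, one_mul]

theorem tendsto_log_one_add_mul_exp_neg (c : ℝ) :
    Tendsto (fun γ : ℝ => Real.log (1 + c * Real.exp (-γ))) atTop (nhds 0) := by
  have hinner : Tendsto (fun γ : ℝ => 1 + c * Real.exp (-γ)) atTop (nhds 1) := by
    simpa using (Real.tendsto_exp_neg_atTop_nhds_zero.const_mul c).const_add 1
  simpa only [log_one] using hinner.log one_ne_zero

theorem stmt0_general {K : ℕ}
    (E Et : Matrix (Fin K) (Fin K) ℝ)
    (hE : Eᵀ * E = 1) (hEt : Etᵀ * Et = 1)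
    (p : Fin K → ℝ) (hp1 : ∑ j, p j = 1) :
    (∀ γ : ℝ, lossNoiseless E Et p (γ • (Et * Eᵀ))
        = Real.log (1 + (K - 1) * Real.exp (-γ))) ∧
    Tendsto (fun γ : ℝ => lossNoiseless E Et p (γ • (Et * Eᵀ))) atTop (nhds 0) := by
  have hloss : ∀ γ : ℝ, lossNoiseless E Et p (γ • (Et * Eᵀ))
      = Real.log (1 + (K - 1) * Real.exp (-γ)) := by
    intro γ
    rw [lossNoiseless_of_predProb_self_eq hp1
      (predProb_self_of_score_eq_smul_one (transpose_mul_smul_mul_transpose_mul hE hEt γ)),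
      Real.log_inv, neg_neg]
  exact ⟨hloss, by simpa only [hloss] using tendsto_log_one_add_mul_exp_neg ((K : ℝ) - 1)⟩

theorem stmt0 {K : ℕ} (hK : 2 ≤ K)
    (E Et : Matrix (Fin K) (Fin K) ℝ)
    (hE : Eᵀ * E = 1) (hEt : Etᵀ * Et = 1)
    (p : Fin K → ℝ) (hp : ∀ j, 0 < p j) (hp1 : ∑ j, p j = 1) :
    (∀ γ : ℝ, lossNoiseless E Et p (γ • (Et * Eᵀ))
        = Real.log (1 + (K - 1) * Real.exp (-γ))) ∧
    Tendsto (fun γ : ℝ => lossNoiseless E Et p (γ • (Et * Eᵀ))) atTop (nhds 0) :=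
  stmt0_general E Et hE hEt p hp1
end

section
/- Let K ≥ 2 and α ∈ [0,1). The noisy cross-entropy loss L is differentiable at every real K×K matrix W, and its Fréchet derivative at W is the linear functional H ↦ ∑_{i=1}^K ∑_{j=1}^K p_j · (p̂_{i|j}(W) − p_{i|j}) · (Ẽ_iᵀ H E_j); equivalently, the gradient of L at W is the matrix ∑_{i,j} p_j (p̂_{i|j}(W) − p_{i|j}) · Ẽ_i E_jᵀ. -/
open Matrix Real Filter

attribute [local instance] Matrix.normedAddCommGroup Matrix.normedSpace

/-- Noisy conditional probabilities `p_{i|j}` under label-noise level `α`. -/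
noncomputable def pcond (K : ℕ) (α : ℝ) (i j : Fin K) : ℝ :=
  if i = j then 1 - α + α / K else α / K

/-- Noisy cross-entropy loss `L(W) = −∑_j p_j ∑_i p_{i|j} log p̂_{i|j}(W)`. -/
noncomputable def lossNoisy {K : ℕ} (E Et : Matrix (Fin K) (Fin K) ℝ) (p : Fin K → ℝ)
    (α : ℝ) (W : Matrix (Fin K) (Fin K) ℝ) : ℝ :=
  -∑ j, p j * ∑ i, pcond K α i j * Real.log (predProb E Et W i j)

/-- The linear functional `H ↦ ∑_{i,j} c_{i,j} · (Ẽ_iᵀ H E_j)`, as a continuous linear map on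
matrices. Note that `Ẽ_iᵀ H E_j = (Ẽᵀ H E)_{i,j}`. -/
noncomputable def gradCLM {K : ℕ} (E Et : Matrix (Fin K) (Fin K) ℝ)
    (c : Fin K → Fin K → ℝ) : Matrix (Fin K) (Fin K) ℝ →L[ℝ] ℝ :=
  LinearMap.toContinuousLinearMap
    { toFun := fun H => ∑ i, ∑ j, c i j * (Etᵀ * H * E) i j
      map_add' := by
        intro H1 H2
        simp [Matrix.add_mul, Matrix.mul_add, Matrix.add_apply, mul_add,
          Finset.sum_add_distrib]
      map_smul' := by
        intro r H
        simp only [Matrix.smul_mul, Matrix.mul_smul, Matrix.smul_apply, smul_eq_mul,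
          RingHom.id_apply, Finset.mul_sum]
        exact Finset.sum_congr rfl fun i _ => Finset.sum_congr rfl fun j _ => by ring }

/-!
For each query `j`, write `z = (Ẽᵀ W E)_{·,j}`, so that `p̂_{·|j}(W) = softmax z`. Since the
noisy conditionals `p_{·|j}` sum to one, the `j`-th cross-entropy term equals
`log ∑_l exp z_l - ∑_i p_{i|j} z_i`, whose gradient in `z` is `softmax z - p_{·|j}`. As `z` is a
linear function of `W`, the chain rule gives the derivative of `L`.
-/

open Finset

section Softmax

variable {ι : Type*} [Fintype ι]

noncomputable def softmax (z : ι → ℝ) (i : ι) : ℝ :=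
  exp (z i) / ∑ l, exp (z l)

variable [Nonempty ι]

lemma sum_exp_pos (z : ι → ℝ) : 0 < ∑ l, exp (z l) :=
  sum_pos (fun l _ => exp_pos (z l)) univ_nonempty

lemma log_softmax (z : ι → ℝ) (i : ι) :
    log (softmax z i) = z i - log (∑ l, exp (z l)) := by
  rw [softmax, log_div (exp_ne_zero _) (sum_exp_pos z).ne', log_exp]

lemma crossEntropy_softmax_eq {q : ι → ℝ} (hq : ∑ i, q i = 1) (z : ι → ℝ) :
    -∑ i, q i * log (softmax z i) = log (∑ l, exp (z l)) - ∑ i, q i * z i := by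
  simp only [log_softmax, mul_sub, sum_sub_distrib, ← sum_mul, hq, one_mul]
  ring

lemma hasFDerivAt_logSumExp (z : ι → ℝ) :
    HasFDerivAt (fun x : ι → ℝ => log (∑ l, exp (x l)))
      (∑ l, softmax z l • ContinuousLinearMap.proj (R := ℝ) (φ := fun _ : ι => ℝ) l) z := by
  have hsum : HasFDerivAt (fun x : ι → ℝ => ∑ l, exp (x l))
      (∑ l, exp (z l) • ContinuousLinearMap.proj (R := ℝ) l) z :=
    HasFDerivAt.fun_sum fun l _ => (hasFDerivAt_apply l z).exp
  refine (hsum.log (sum_exp_pos z).ne').congr_fderiv ?_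
  rw [smul_sum]
  exact sum_congr rfl fun l _ => by rw [smul_smul, softmax, div_eq_inv_mul]

lemma hasFDerivAt_crossEntropy_softmax {q : ι → ℝ} (hq : ∑ i, q i = 1) (z : ι → ℝ) :
    HasFDerivAt (fun x : ι → ℝ => -∑ i, q i * log (softmax x i))
      (∑ i, (softmax z i - q i) • ContinuousLinearMap.proj (R := ℝ) (φ := fun _ : ι => ℝ) i) z := by
  have hlin : HasFDerivAt (fun x : ι → ℝ => ∑ i, q i * x i)
      (∑ i, q i • ContinuousLinearMap.proj (R := ℝ) i) z :=
    HasFDerivAt.fun_sum fun i _ => (hasFDerivAt_apply i z).const_mul (q i)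
  simp only [crossEntropy_softmax_eq hq]
  refine ((hasFDerivAt_logSumExp z).fun_sub hlin).congr_fderiv ?_
  rw [← sum_sub_distrib]
  exact sum_congr rfl fun i _ => (sub_smul _ _ _).symm

end Softmax

lemma sum_pcond {K : ℕ} (hK : K ≠ 0) (α : ℝ) (j : Fin K) : ∑ i, pcond K α i j = 1 := by
  have hsplit : ∀ i, pcond K α i j = α / K + if i = j then 1 - α else 0 := fun i => by
    unfold pcond; split_ifs <;> ring
  simp only [hsplit, sum_add_distrib, sum_const, card_univ, Fintype.card_fin, nsmul_eq_mul,
    sum_ite_eq', mem_univ, if_true]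
  field_simp
  ring

noncomputable def sandwichColCLM {l m n o : Type*} [Fintype l] [Fintype m] [Fintype n]
    (A : Matrix l m ℝ) (B : Matrix n o ℝ) (j : o) : Matrix m n ℝ →L[ℝ] (l → ℝ) :=
  LinearMap.toContinuousLinearMap
    { toFun := fun H i => (A * H * B) i j
      map_add' := fun H₁ H₂ => by ext; simp [Matrix.mul_add, Matrix.add_mul]
      map_smul' := fun r H => by ext; simp }

@[simp]
lemma sandwichColCLM_apply {l m n o : Type*} [Fintype l] [Fintype m] [Fintype n]
    (A : Matrix l m ℝ) (B : Matrix n o ℝ) (j : o) (H : Matrix m n ℝ) (i : l) :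
    sandwichColCLM A B j H i = (A * H * B) i j := rfl

lemma predProb_eq_softmax {K : ℕ} (E Et W : Matrix (Fin K) (Fin K) ℝ) (i j : Fin K) :
    predProb E Et W i j = softmax (sandwichColCLM Etᵀ E j W) i := rfl

lemma gradCLM_apply {K : ℕ} (E Et : Matrix (Fin K) (Fin K) ℝ) (c : Fin K → Fin K → ℝ)
    (H : Matrix (Fin K) (Fin K) ℝ) :
    gradCLM E Et c H = ∑ i, ∑ j, c i j * (Etᵀ * H * E) i j := rfl

lemma gradCLM_eq_sum_comp_sandwichColCLM {K : ℕ} (E Et : Matrix (Fin K) (Fin K) ℝ)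
    (w : Fin K → ℝ) (c : Fin K → Fin K → ℝ) :
    gradCLM E Et (fun i j => w j * c i j) = ∑ j, w j • (∑ i, c i j •
      ContinuousLinearMap.proj (R := ℝ) (φ := fun _ : Fin K => ℝ) i).comp
        (sandwichColCLM Etᵀ E j) := by
  ext H
  simp only [gradCLM_apply, _root_.sum_apply, _root_.smul_apply,
    ContinuousLinearMap.comp_apply, ContinuousLinearMap.proj_apply, sandwichColCLM_apply,
    smul_eq_mul, mul_sum]
  rw [sum_comm]
  exact sum_congr rfl fun i _ => sum_congr rfl fun j _ => by ring

lemma gradCLM_apply_eq_trace {K : ℕ} (E Et : Matrix (Fin K) (Fin K) ℝ)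
    (c : Fin K → Fin K → ℝ) (H : Matrix (Fin K) (Fin K) ℝ) :
    gradCLM E Et c H = trace ((∑ i, ∑ j, c i j •
      vecMulVec (fun a => Et a i) (fun b => E b j))ᵀ * H) := by
  simp only [gradCLM_apply, transpose_sum, Matrix.sum_mul, trace_sum, transpose_smul,
    Matrix.smul_mul, trace_smul, smul_eq_mul]
  refine sum_congr rfl fun i _ => sum_congr rfl fun j _ => congrArg _ ?_
  simp only [trace, diag_apply, mul_apply, transpose_apply, vecMulVec_apply, sum_mul]
  exact sum_congr rfl fun k _ => sum_congr rfl fun a _ => by ring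

theorem stmt2_general {K : ℕ} (hK : 2 ≤ K) (α : ℝ)
    (E Et : Matrix (Fin K) (Fin K) ℝ)
    (p : Fin K → ℝ) :
    ∀ W : Matrix (Fin K) (Fin K) ℝ,
      HasFDerivAt (lossNoisy E Et p α)
        (gradCLM E Et (fun i j => p j * (predProb E Et W i j - pcond K α i j))) W ∧
      -- equivalently, the gradient is the matrix `∑_{i,j} p_j (p̂_{i|j}(W) − p_{i|j}) Ẽ_i E_jᵀ`,
      -- acting on `H` through the Frobenius inner product `trace (Gᵀ H)`:
      ∀ H : Matrix (Fin K) (Fin K) ℝ,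
        gradCLM E Et (fun i j => p j * (predProb E Et W i j - pcond K α i j)) H
          = Matrix.trace
              ((∑ i, ∑ j, (p j * (predProb E Et W i j - pcond K α i j)) •
                  Matrix.vecMulVec (fun a => Et a i) (fun b => E b j))ᵀ * H) := by
  intro W
  have : Nonempty (Fin K) := ⟨⟨0, by omega⟩⟩
  refine ⟨?_, gradCLM_apply_eq_trace E Et _⟩
  have hloss : lossNoisy E Et p α = fun V =>
      ∑ j, p j * -∑ i, pcond K α i j * log (softmax (sandwichColCLM Etᵀ E j V) i) := by
    ext V
    simp only [lossNoisy, predProb_eq_softmax, mul_neg, sum_neg_distrib]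
  rw [hloss, gradCLM_eq_sum_comp_sandwichColCLM]
  exact HasFDerivAt.fun_sum fun j _ =>
    ((hasFDerivAt_crossEntropy_softmax (sum_pcond (by omega) α j) _).comp W
      (sandwichColCLM Etᵀ E j).hasFDerivAt).const_mul (p j)

theorem stmt2 {K : ℕ} (hK : 2 ≤ K) (α : ℝ) (hα0 : 0 ≤ α) (hα1 : α < 1)
    (E Et : Matrix (Fin K) (Fin K) ℝ)
    (hE : Eᵀ * E = 1) (hEt : Etᵀ * Et = 1)
    (p : Fin K → ℝ) (hp : ∀ j, 0 < p j) (hp1 : ∑ j, p j = 1) :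
    ∀ W : Matrix (Fin K) (Fin K) ℝ,
      HasFDerivAt (lossNoisy E Et p α)
        (gradCLM E Et (fun i j => p j * (predProb E Et W i j - pcond K α i j))) W ∧
      -- equivalently, the gradient is the matrix `∑_{i,j} p_j (p̂_{i|j}(W) − p_{i|j}) Ẽ_i E_jᵀ`,
      -- acting on `H` through the Frobenius inner product `trace (Gᵀ H)`:
      ∀ H : Matrix (Fin K) (Fin K) ℝ,
        gradCLM E Et (fun i j => p j * (predProb E Et W i j - pcond K α i j)) H
          = Matrix.trace
              ((∑ i, ∑ j, (p j * (predProb E Et W i j - pcond K α i j)) •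
                  Matrix.vecMulVec (fun a => Et a i) (fun b => E b j))ᵀ * H) :=
  stmt2_general hK α E Et p
end

section
/- Let K ≥ 2, α ∈ [0,1), and η > 0. Define a sequence of real K×K matrices V : ℕ → Matrix by V_0 = 0 and V_{t+1} = V_t − η·G(V_t), where G(V)_{i,j} = p_j · (softmax(V·,j)_i − p_{i|j}) and softmax(V·,j)_i = exp(V_{i,j}) / ∑_{l=1}^K exp(V_{l,j}). Then for every time step t, every column index j, and all row indices i₁, i₂ with i₁ ≠ j and i₂ ≠ j, one has (V_t)_{i₁,j} = (V_t)_{i₂,j}. -/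
open Matrix Real Filter

/-- Softmax of the `j`-th column of `V`, evaluated at row `i`. -/
noncomputable def softmaxCol {K : ℕ} (V : Matrix (Fin K) (Fin K) ℝ) (i j : Fin K) : ℝ :=
  Real.exp (V i j) / ∑ l, Real.exp (V l j)

/-- Gradient in the task-representation space:
`G(V)_{i,j} = p_j (softmax(V·,j)_i − p_{i|j})`. -/
noncomputable def Gmat {K : ℕ} (α : ℝ) (p : Fin K → ℝ) (V : Matrix (Fin K) (Fin K) ℝ) :
    Matrix (Fin K) (Fin K) ℝ :=
  Matrix.of fun i j => p j * (softmaxCol V i j - pcond K α i j)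

/-! Off column `j`'s diagonal, the entry `G(V)_{i,j}` depends on `i` only through `V_{i,j}`, so a
gradient step keeps equal off-diagonal entries of a column equal; `V_0 = 0` starts the induction. -/

def OffDiagColConst {n R : Type*} (V : Matrix n n R) : Prop :=
  ∀ j i₁ i₂, i₁ ≠ j → i₂ ≠ j → V i₁ j = V i₂ j

theorem pcond_of_ne {K : ℕ} (α : ℝ) {i j : Fin K} (h : i ≠ j) : pcond K α i j = α / K :=
  if_neg h

theorem softmaxCol_eq_of_eq {K : ℕ} {V : Matrix (Fin K) (Fin K) ℝ} {i₁ i₂ j : Fin K}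
    (h : V i₁ j = V i₂ j) : softmaxCol V i₁ j = softmaxCol V i₂ j := by
  rw [softmaxCol, softmaxCol, h]

theorem offDiagColConst_zero {n R : Type*} [Zero R] : OffDiagColConst (0 : Matrix n n R) :=
  fun _ _ _ _ _ => rfl

theorem offDiagColConst_Gmat {K : ℕ} (α : ℝ) (p : Fin K → ℝ) {V : Matrix (Fin K) (Fin K) ℝ}
    (hV : OffDiagColConst V) : OffDiagColConst (Gmat α p V) := by
  intro j i₁ i₂ h₁ h₂
  simp only [Gmat, of_apply, pcond_of_ne α h₁, pcond_of_ne α h₂,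
    softmaxCol_eq_of_eq (hV j i₁ i₂ h₁ h₂)]

theorem offDiagColConst_sub_smul {n R : Type*} [Ring R] {V W : Matrix n n R}
    (hV : OffDiagColConst V) (hW : OffDiagColConst W) (η : R) :
    OffDiagColConst (V - η • W) := by
  intro j i₁ i₂ h₁ h₂
  simp only [Matrix.sub_apply, Matrix.smul_apply, hV j i₁ i₂ h₁ h₂, hW j i₁ i₂ h₁ h₂]

theorem stmt3_general {K : ℕ} (α : ℝ)
    (η : ℝ)
    (p : Fin K → ℝ)
    (V : ℕ → Matrix (Fin K) (Fin K) ℝ)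
    (hV0 : V 0 = 0)
    (hVrec : ∀ t, V (t + 1) = V t - η • Gmat α p (V t)) :
    ∀ (t : ℕ) (j i₁ i₂ : Fin K), i₁ ≠ j → i₂ ≠ j → V t i₁ j = V t i₂ j := by
  intro t
  induction t with
  | zero => exact hV0 ▸ offDiagColConst_zero
  | succ t ih => exact hVrec t ▸ offDiagColConst_sub_smul ih (offDiagColConst_Gmat α p ih) η

theorem stmt3 {K : ℕ} (hK : 2 ≤ K) (α : ℝ) (hα0 : 0 ≤ α) (hα1 : α < 1)
    (η : ℝ) (hη : 0 < η)
    (p : Fin K → ℝ) (hp : ∀ j, 0 < p j) (hp1 : ∑ j, p j = 1)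
    (V : ℕ → Matrix (Fin K) (Fin K) ℝ)
    (hV0 : V 0 = 0)
    (hVrec : ∀ t, V (t + 1) = V t - η • Gmat α p (V t)) :
    ∀ (t : ℕ) (j i₁ i₂ : Fin K), i₁ ≠ j → i₂ ≠ j → V t i₁ j = V t i₂ j :=
  stmt3_general α η p V hV0 hVrec
end

section
/- Let K ≥ 2 be a natural number, p ∈ (0,1], and η > 0. Define Δ : ℕ → ℝ by Δ_0 = 0 and Δ_{t+1} = Δ_t + η·p·K / (exp(Δ_t) + K − 1). Then exp(Δ_t) / (η·p·K·t) → 1 as t → ∞. -/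
/-!
Writing `x_t = exp Δ_t` and `s_t = c / (x_t + K - 1)` with `c = η p K`, the recursion becomes
`x_{t+1} - x_t = x_t (exp s_t - 1)`. The positive continuous increments force `Δ_t → ∞`, so
`s_t → 0` and `x_t s_t → c`; since `exp s - 1 ~ s`, the increments of `x_t` tend to `c`, and
Cesàro averaging gives `x_t / t → c`.
-/

open Real Filter Topology

theorem tendsto_atTop_of_succ_eq_add {f : ℝ → ℝ} (hf : Continuous f) (hpos : ∀ x, 0 < f x)
    {u : ℕ → ℝ} (hu : ∀ n, u (n + 1) = u n + f (u n)) : Tendsto u atTop atTop := by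
  have hmono : Monotone u := monotone_nat_of_le_succ fun n => by
    rw [hu n]; linarith [hpos (u n)]
  rcases tendsto_atTop_of_monotone hmono with h | ⟨l, hl⟩
  · exact h
  · have hsucc : Tendsto (fun n => u (n + 1)) atTop (𝓝 (l + f l)) :=
      (hl.add ((hf.tendsto l).comp hl)).congr fun n => (hu n).symm
    have hfix := tendsto_nhds_unique (hl.comp (tendsto_add_atTop_nat 1)) hsucc
    linarith [hpos l]

theorem tendsto_div_natCast_of_tendsto_sub {u : ℕ → ℝ} {c : ℝ}
    (h : Tendsto (fun n => u (n + 1) - u n) atTop (𝓝 c)) :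
    Tendsto (fun n : ℕ => u n / n) atTop (𝓝 c) := by
  have hmean : Tendsto (fun n : ℕ => (n : ℝ)⁻¹ * (u n - u 0)) atTop (𝓝 c) := by
    simpa only [Finset.sum_range_sub (fun i => u i)] using h.cesaro
  have hinv : Tendsto (fun n : ℕ => u 0 * (n : ℝ)⁻¹) atTop (𝓝 0) := by
    simpa using tendsto_inv_atTop_zero.comp tendsto_natCast_atTop_atTop |>.const_mul (u 0)
  simpa only [add_zero] using (hmean.add hinv).congr fun n => by ring

theorem Real.tendsto_exp_sub_one_div_nhdsNE :
    Tendsto (fun y : ℝ => (exp y - 1) / y) (𝓝[≠] 0) (𝓝 1) := by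
  have h := hasDerivAt_iff_tendsto_slope.mp (hasDerivAt_exp 0)
  rw [exp_zero] at h
  refine h.congr fun y => ?_
  rw [slope_def_field, exp_zero, sub_zero]

theorem tendsto_mul_exp_div_add_sub_one {c : ℝ} (hc : c ≠ 0) (a : ℝ) :
    Tendsto (fun x => x * (exp (c / (x + a)) - 1)) atTop (𝓝 c) := by
  have hshift : Tendsto (fun x : ℝ => x + a) atTop atTop :=
    tendsto_atTop_add_const_right _ a tendsto_id
  have hs : Tendsto (fun x : ℝ => c / (x + a)) atTop (𝓝 0) :=
    tendsto_const_nhds.div_atTop hshift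
  have hs_ne : ∀ᶠ x : ℝ in atTop, c / (x + a) ≠ 0 :=
    (hshift.eventually_gt_atTop 0).mono fun x hx => div_ne_zero hc hx.ne'
  have hslope : Tendsto (fun x : ℝ => (exp (c / (x + a)) - 1) / (c / (x + a))) atTop (𝓝 1) :=
    Real.tendsto_exp_sub_one_div_nhdsNE.comp (tendsto_nhdsWithin_iff.mpr ⟨hs, hs_ne⟩)
  -- `x * s = c - a * s` for `s = c / (x + a)`
  have hlin : Tendsto (fun x : ℝ => c - a * (c / (x + a))) atTop (𝓝 c) := by
    simpa using tendsto_const_nhds.sub (hs.const_mul a)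
  refine (mul_one c ▸ hlin.mul hslope).congr' ?_
  filter_upwards [hshift.eventually_gt_atTop 0, hs_ne] with x hx hsx
  field_simp
  ring

theorem tendsto_exp_div_natCast_of_succ_eq {c a : ℝ} (hc : 0 < c) (ha : 0 ≤ a) {Δ : ℕ → ℝ}
    (hrec : ∀ t, Δ (t + 1) = Δ t + c / (exp (Δ t) + a)) :
    Tendsto (fun t : ℕ => exp (Δ t) / t) atTop (𝓝 c) := by
  have hΔ : Tendsto Δ atTop atTop :=
    tendsto_atTop_of_succ_eq_add (f := fun y => c / (exp y + a))
      (continuous_const.div (continuous_exp.add continuous_const) fun y => by positivity)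
      (fun y => by positivity) hrec
  refine tendsto_div_natCast_of_tendsto_sub ?_
  refine ((tendsto_mul_exp_div_add_sub_one hc.ne' a).comp (tendsto_exp_atTop.comp hΔ)).congr
    fun t => ?_
  simp only [Function.comp, hrec t, exp_add]
  ring

theorem stmt4_general (K : ℕ) (hK : 2 ≤ K) (p η : ℝ) (hp0 : 0 < p) (hη : 0 < η)
    (Δ : ℕ → ℝ)
    (hrec : ∀ t, Δ (t + 1) = Δ t + η * p * K / (Real.exp (Δ t) + K - 1)) :
    Tendsto (fun t : ℕ => Real.exp (Δ t) / (η * p * K * t)) atTop (nhds 1) := by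
  have hK1 : (1 : ℝ) ≤ K := by exact_mod_cast one_le_two.trans hK
  have hc : 0 < η * p * K := by positivity
  have h := tendsto_exp_div_natCast_of_succ_eq hc (sub_nonneg.mpr hK1)
    (Δ := Δ) fun t => by rw [hrec t, add_sub_assoc]
  refine (div_self hc.ne' ▸ h.div_const (η * p * K)).congr fun t => ?_
  rw [div_div, mul_comm]

theorem stmt4 (K : ℕ) (hK : 2 ≤ K) (p η : ℝ) (hp0 : 0 < p) (hp1 : p ≤ 1) (hη : 0 < η)
    (Δ : ℕ → ℝ) (h0 : Δ 0 = 0)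
    (hrec : ∀ t, Δ (t + 1) = Δ t + η * p * K / (Real.exp (Δ t) + K - 1)) :
    Tendsto (fun t : ℕ => Real.exp (Δ t) / (η * p * K * t)) atTop (nhds 1) :=
  stmt4_general K hK p η hp0 hη Δ hrec
end

section
/- Let K ≥ 2 be a natural number, α ∈ (0,1), η > 0, and p > 0. Define f : ℝ → ℝ by f(Δ) = Δ + η·p·K/(exp(Δ) + K − 1) − α·η·p, and set Δ* = log(K·(1−α+α/K)/α). Then: (i) f(Δ*) = Δ*; (ii) f is differentiable at Δ* with f′(Δ*) = 1 − η·p·α·(1−α+α/K); and (iii) |f′(Δ*)| < 1 if and only if η·p·α·(1−α+α/K) < 2. -/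
/-! At `Δ*` one has `exp Δ* + K - 1 = K / α`, so the softmax term `η p K / (exp Δ + K - 1)` equals
`α η p` there and cancels the noise term. Differentiating that term gives
`-η p K exp Δ / (exp Δ + K - 1)²`, which at `Δ*` is `-η p α · (α exp Δ* / K) = -η p α (1 - α + α / K)`.
Finally `|1 - x| < 1 ↔ x < 2` for the positive number `x = η p α (1 - α + α / K)`. -/

open Real

theorem hasDerivAt_div_exp_add (a b x : ℝ) (h : exp x + b ≠ 0) :
    HasDerivAt (fun Δ => a / (exp Δ + b)) (-(a * exp x) / (exp x + b) ^ 2) x := by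
  have hden : HasDerivAt (fun Δ => exp Δ + b) (exp x) x := (hasDerivAt_exp x).add_const b
  simpa only [zero_mul, zero_sub] using (hasDerivAt_const x a).fun_div hden h

theorem abs_one_sub_lt_one_iff {x : ℝ} (hx : 0 < x) : |1 - x| < 1 ↔ x < 2 := by
  rw [abs_sub_lt_iff]
  constructor
  · rintro ⟨_, h⟩; linarith
  · intro h; constructor <;> linarith

section OptimalMargin

variable {K α : ℝ}

theorem one_sub_add_div_pos (hK : 0 ≤ K) (hα0 : 0 ≤ α) (hα1 : α < 1) : 0 < 1 - α + α / K := by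
  have : 0 ≤ α / K := div_nonneg hα0 hK
  linarith

theorem exp_log_optimalMargin (hK : 0 < K) (hα0 : 0 < α) (hα1 : α < 1) :
    exp (log (K * (1 - α + α / K) / α)) = K * (1 - α + α / K) / α :=
  exp_log (div_pos (mul_pos hK (one_sub_add_div_pos hK.le hα0.le hα1)) hα0)

theorem exp_log_optimalMargin_add_sub_one (hK : 0 < K) (hα0 : 0 < α) (hα1 : α < 1) :
    exp (log (K * (1 - α + α / K) / α)) + K - 1 = K / α := by
  rw [exp_log_optimalMargin hK hα0 hα1]
  field_simp
  ring

end OptimalMargin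

theorem stmt6 (K : ℕ) (hK : 2 ≤ K) (α : ℝ) (hα0 : 0 < α) (hα1 : α < 1)
    (η p : ℝ) (hη : 0 < η) (hp : 0 < p)
    (f : ℝ → ℝ)
    (hf : ∀ Δ : ℝ, f Δ = Δ + η * p * K / (Real.exp Δ + K - 1) - α * η * p)
    (Δstar : ℝ) (hΔstar : Δstar = Real.log (K * (1 - α + α / K) / α)) :
    f Δstar = Δstar ∧
    HasDerivAt f (1 - η * p * α * (1 - α + α / K)) Δstar ∧
    (|1 - η * p * α * (1 - α + α / K)| < 1 ↔ η * p * α * (1 - α + α / K) < 2) := by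
  have hKpos : (0 : ℝ) < K := by exact_mod_cast (by omega : 0 < K)
  have hexp := exp_log_optimalMargin hKpos hα0 hα1
  have hden := exp_log_optimalMargin_add_sub_one hKpos hα0 hα1
  rw [← hΔstar] at hexp hden
  refine ⟨?_, ?_, abs_one_sub_lt_one_iff ?_⟩
  · rw [hf, hden]
    field_simp
    ring
  · have hderiv : HasDerivAt (fun Δ => Δ + η * p * K / (exp Δ + (K - 1)) - α * η * p)
        (1 + -(η * p * K * exp Δstar) / (exp Δstar + (K - 1)) ^ 2) Δstar :=
      ((hasDerivAt_id Δstar).add (hasDerivAt_div_exp_add (η * p * K) (K - 1) Δstar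
        (by rw [← add_sub_assoc, hden]; positivity))).sub_const (α * η * p)
    refine (hderiv.congr_of_eventuallyEq (.of_forall fun Δ => ?_)).congr_deriv ?_
    · rw [hf, add_sub_assoc (exp Δ)]
    · rw [← add_sub_assoc, hden, hexp]
      field_simp
      ring
  · have := one_sub_add_div_pos hKpos.le hα0.le hα1
    positivity
end

section
/- Let β > 1 be a real constant. There exist constants c > 0 and t₀ ≥ 1 such that for every natural number M ≥ 1 and every real t with t₀ ≤ t ≤ M^β, one has ∑_{i=1}^{M} i^{−β} · exp(−i^{−β}·t) ≥ c · t^{−(1 − 1/β)}. -/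
open Real Finset

/-! Write `t = s ^ β`. Every index `i` with `s / 2 ≤ i ≤ s` has `1 ≤ i ^ (-β) * t ≤ 2 ^ β`, so its
term is at least `t⁻¹ * exp (-2 ^ β)`; for `s ≥ 4` there are at least `s / 4` such indices, and
`s / t = t ^ (-(1 - 1 / β))`. -/

lemma inv_mul_exp_neg_le_mul_exp_neg_mul {a t C : ℝ} (ht : 0 < t) (h1 : 1 ≤ a * t)
    (hC : a * t ≤ C) : t⁻¹ * exp (-C) ≤ a * exp (-a * t) := by
  have ha : t⁻¹ ≤ a := by rwa [inv_le_iff_one_le_mul₀ ht]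
  rw [neg_mul]
  exact mul_le_mul ha (exp_le_exp.2 (neg_le_neg hC)) (exp_pos _).le ((inv_pos.2 ht).le.trans ha)

lemma one_le_rpow_neg_mul_rpow_le_two_rpow {β s x : ℝ} (hβ : 0 ≤ β) (hs : 0 < s)
    (hx : s / 2 ≤ x) (hxs : x ≤ s) :
    1 ≤ x ^ (-β) * s ^ β ∧ x ^ (-β) * s ^ β ≤ 2 ^ β := by
  have hx0 : 0 < x := by linarith
  rw [rpow_neg hx0.le, inv_mul_eq_div, ← div_rpow hs.le hx0.le]
  refine ⟨one_le_rpow ((one_le_div hx0).2 hxs) hβ, rpow_le_rpow (by positivity) ?_ hβ⟩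
  rw [div_le_iff₀ hx0]
  linarith

lemma le_card_Icc_ceil_half_floor {s : ℝ} (hs : 4 ≤ s) :
    s / 4 ≤ #(Icc ⌈s / 2⌉₊ ⌊s⌋₊) := by
  have hK : (⌈s / 2⌉₊ : ℝ) < s / 2 + 1 := Nat.ceil_lt_add_one (by linarith)
  have hN : s < ⌊s⌋₊ + 1 := Nat.lt_floor_add_one s
  have hKN : ⌈s / 2⌉₊ ≤ ⌊s⌋₊ + 1 := by
    have : (⌈s / 2⌉₊ : ℝ) ≤ ⌊s⌋₊ + 1 := by linarith
    exact_mod_cast this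
  rw [Nat.card_Icc, Nat.cast_sub hKN]
  push_cast
  linarith

lemma div_four_mul_le_sum_rpow_neg_mul_exp {β s : ℝ} (hβ : 0 ≤ β) (hs : 4 ≤ s) {M : ℕ}
    (hsM : s ≤ M) :
    s / 4 * ((s ^ β)⁻¹ * exp (-2 ^ β)) ≤
      ∑ i ∈ Icc 1 M, (i : ℝ) ^ (-β) * exp (-(i : ℝ) ^ (-β) * s ^ β) := by
  have hs0 : 0 < s := by linarith
  have hsub : Icc ⌈s / 2⌉₊ ⌊s⌋₊ ⊆ Icc 1 M :=
    Icc_subset_Icc (Nat.one_le_cast.1 ((Nat.le_ceil _).trans' (by linarith)))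
      (Nat.floor_le_of_le hsM)
  calc s / 4 * ((s ^ β)⁻¹ * exp (-2 ^ β))
      ≤ #(Icc ⌈s / 2⌉₊ ⌊s⌋₊) * ((s ^ β)⁻¹ * exp (-2 ^ β)) := by
        gcongr
        exact le_card_Icc_ceil_half_floor hs
    _ ≤ ∑ i ∈ Icc ⌈s / 2⌉₊ ⌊s⌋₊, (i : ℝ) ^ (-β) * exp (-(i : ℝ) ^ (-β) * s ^ β) := by
        rw [← nsmul_eq_mul]
        refine card_nsmul_le_sum _ _ _ fun i hi => ?_
        rw [mem_Icc, Nat.ceil_le, Nat.le_floor_iff hs0.le] at hi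
        obtain ⟨h1, h2⟩ := one_le_rpow_neg_mul_rpow_le_two_rpow hβ hs0 hi.1 hi.2
        exact inv_mul_exp_neg_le_mul_exp_neg_mul (by positivity) h1 h2
    _ ≤ ∑ i ∈ Icc 1 M, (i : ℝ) ^ (-β) * exp (-(i : ℝ) ^ (-β) * s ^ β) :=
        sum_le_sum_of_subset_of_nonneg hsub fun i _ _ => by positivity

theorem stmt8 (β : ℝ) (hβ : 1 < β) :
    ∃ c : ℝ, 0 < c ∧ ∃ t₀ : ℝ, 1 ≤ t₀ ∧
      ∀ M : ℕ, 1 ≤ M → ∀ t : ℝ, t₀ ≤ t → t ≤ (M : ℝ) ^ β →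
        c * t ^ (-(1 - 1 / β)) ≤
          ∑ i ∈ Finset.Icc 1 M, (i : ℝ) ^ (-β) * Real.exp (-(i : ℝ) ^ (-β) * t) := by
  have hβ0 : 0 < β := by linarith
  refine ⟨exp (-2 ^ β) / 4, by positivity, 4 ^ β, one_le_rpow (by norm_num) hβ0.le, ?_⟩
  intro M _ t ht htM
  have ht0 : 0 < t := (rpow_pos_of_pos (by norm_num) β).trans_le ht
  obtain ⟨s, hs0, rfl⟩ : ∃ s, 0 < s ∧ s ^ β = t :=
    ⟨t ^ (1 / β), rpow_pos_of_pos ht0 _, by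
      rw [← rpow_mul ht0.le, one_div_mul_cancel hβ0.ne', rpow_one]⟩
  have hs4 : 4 ≤ s := (rpow_le_rpow_iff (by norm_num) hs0.le hβ0).1 ht
  have hsM : s ≤ M := (rpow_le_rpow_iff hs0.le (Nat.cast_nonneg _) hβ0).1 htM
  calc exp (-2 ^ β) / 4 * (s ^ β) ^ (-(1 - 1 / β))
      = s / 4 * ((s ^ β)⁻¹ * exp (-2 ^ β)) := by
        rw [← rpow_mul hs0.le, show β * -(1 - 1 / β) = 1 - β by field_simp; ring,
          rpow_sub hs0, rpow_one]
        ring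
    _ ≤ _ := div_four_mul_le_sum_rpow_neg_mul_exp hβ0.le hs4 hsM
end

section
/- Let 0 < A < 1 and let B > 0 satisfy B > log(A/(1−A)). Define g : ℝ → ℝ by g(x) = A·x + log(1 + A·(exp(−x) − 1)). Then for every x with 0 < x ≤ B, g(x) ≥ min( A·(1−A)/2 , g(B)/B² ) · x². -/
/-!
Put `φ x = g x - c * x ^ 2`, with `c` the minimum in the statement, so that `φ 0 = φ' 0 = 0`,
`φ B ≥ 0` and `φ'' = g'' - 2 c`. In terms of `t = exp (-x)`, `g'' = A (1 - A) t / (1 - A + A t) ^ 2`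
increases up to `x = log (A / (1 - A))` and decreases afterwards, and `g'' 0 = A (1 - A) ≥ 2 c`.
So `φ''` is nonnegative on some `[0, s]` and nonpositive on `[s, B]`: on `[0, s]` the function `φ`
is convex with a horizontal tangent at `0`, and on `[s, B]` it is concave with nonnegative values
at both ends; either way `φ ≥ 0`.
-/

open Real

/-- `g(x) = A·x + log(1 + A·(exp(−x) − 1))`, the excess cross-entropy risk at margin deficit `x`. -/
noncomputable def gFun (A x : ℝ) : ℝ := A * x + Real.log (1 + A * (Real.exp (-x) - 1))

open Set

section SignOfSecondDerivative

variable {f f' f'' : ℝ → ℝ} {a b : ℝ}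

theorem monotoneOn_Icc_of_hasDerivAt (hf : ∀ x, HasDerivAt f (f' x) x)
    (h : ∀ x ∈ Ioo a b, 0 ≤ f' x) : MonotoneOn f (Icc a b) :=
  monotoneOn_of_hasDerivWithinAt_nonneg (convex_Icc a b)
    (fun x _ ↦ (hf x).continuousAt.continuousWithinAt) (fun x _ ↦ (hf x).hasDerivWithinAt)
    (fun x hx ↦ h x (by rwa [interior_Icc] at hx))

theorem nonneg_of_deriv2_nonneg (hf : ∀ x, HasDerivAt f (f' x) x)
    (hf' : ∀ x, HasDerivAt f' (f'' x) x) (ha : f a = 0) (ha' : f' a = 0)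
    (h : ∀ x ∈ Ioo a b, 0 ≤ f'' x) : ∀ x ∈ Icc a b, 0 ≤ f x := by
  have hf'_nonneg : ∀ x ∈ Ioo a b, 0 ≤ f' x := fun x hx ↦
    ha' ▸ monotoneOn_Icc_of_hasDerivAt hf' h (left_mem_Icc.2 (hx.1.trans hx.2).le)
      (Ioo_subset_Icc_self hx) hx.1.le
  exact fun x hx ↦
    ha ▸ monotoneOn_Icc_of_hasDerivAt hf hf'_nonneg (left_mem_Icc.2 (hx.1.trans hx.2)) hx hx.1

theorem nonneg_of_deriv2_nonpos (hf : ∀ x, HasDerivAt f (f' x) x)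
    (hf' : ∀ x, HasDerivAt f' (f'' x) x) (ha : 0 ≤ f a) (hb : 0 ≤ f b)
    (h : ∀ x ∈ Ioo a b, f'' x ≤ 0) : ∀ x ∈ Icc a b, 0 ≤ f x := by
  have hconc : ConcaveOn ℝ (Icc a b) f :=
    concaveOn_of_hasDerivWithinAt2_nonpos (convex_Icc a b)
      (fun x _ ↦ (hf x).continuousAt.continuousWithinAt) (fun x _ ↦ (hf x).hasDerivWithinAt)
      (fun x _ ↦ (hf' x).hasDerivWithinAt) (fun x hx ↦ h x (by rwa [interior_Icc] at hx))
  intro x hx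
  have hab : a ≤ b := hx.1.trans hx.2
  exact (le_min ha hb).trans
    (hconc.min_le_of_mem_Icc (left_mem_Icc.2 hab) (right_mem_Icc.2 hab) hx)

theorem nonneg_of_deriv2_nonneg_of_nonpos {s : ℝ} (hf : ∀ x, HasDerivAt f (f' x) x)
    (hf' : ∀ x, HasDerivAt f' (f'' x) x) (ha : f a = 0) (ha' : f' a = 0) (hb : 0 ≤ f b)
    (hs : s ∈ Icc a b) (h_nonneg : ∀ x ∈ Ioo a s, 0 ≤ f'' x)
    (h_nonpos : ∀ x ∈ Ioo s b, f'' x ≤ 0) :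
    ∀ x ∈ Icc a b, 0 ≤ f x := by
  have hconv := nonneg_of_deriv2_nonneg hf hf' ha ha' h_nonneg
  have hconc := nonneg_of_deriv2_nonpos hf hf' (hconv s (right_mem_Icc.2 hs.1)) hb h_nonpos
  intro x hx
  rcases le_total x s with hxs | hsx
  · exact hconv x ⟨hx.1, hxs⟩
  · exact hconc x ⟨hsx, hx.2⟩

end SignOfSecondDerivative

theorem exists_crossing_of_antitoneOn {f : ℝ → ℝ} {a b m c : ℝ} (hab : a ≤ b)
    (hf : ContinuousOn f (Icc a b)) (ha : c ≤ f a) (h_le : ∀ y ∈ Icc a b, y ≤ m → c ≤ f y)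
    (h_anti : AntitoneOn f (Ici m)) :
    ∃ s ∈ Icc a b, (∀ y ∈ Icc a s, c ≤ f y) ∧ ∀ y ∈ Ioc s b, f y ≤ c := by
  have h_ge_of_le {s : ℝ} (hs : s ∈ Icc a b) (hcs : c ≤ f s) : ∀ y ∈ Icc a s, c ≤ f y := by
    intro y hy
    rcases le_total y m with hym | hmy
    · exact h_le y ⟨hy.1, hy.2.trans hs.2⟩ hym
    · exact hcs.trans (h_anti hmy (hmy.trans hy.2) hy.2)
  rcases le_or_gt c (f b) with hb | hb
  · exact ⟨b, right_mem_Icc.2 hab, h_ge_of_le (right_mem_Icc.2 hab) hb, fun y hy ↦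
      absurd hy.2 (not_le.2 hy.1)⟩
  have hmb : m < b := lt_of_not_ge fun hbm ↦ hb.not_ge (h_le b (right_mem_Icc.2 hab) hbm)
  have hm' : max a m ∈ Icc a b := ⟨le_max_left a m, max_le hab hmb.le⟩
  have hcm' : c ≤ f (max a m) := by
    rcases le_total a m with ham | hma
    · rw [max_eq_right ham]; exact h_le m ⟨ham, hmb.le⟩ le_rfl
    · rwa [max_eq_left hma]
  obtain ⟨s, hs, hfs⟩ : ∃ s ∈ Icc (max a m) b, f s = c :=
    intermediate_value_Icc' hm'.2 (hf.mono (Icc_subset_Icc_left hm'.1)) ⟨hb.le, hcm'⟩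
  have hms : m ≤ s := (le_max_right a m).trans hs.1
  refine ⟨s, ⟨hm'.1.trans hs.1, hs.2⟩, h_ge_of_le ⟨hm'.1.trans hs.1, hs.2⟩ hfs.ge, ?_⟩
  intro y hy
  exact hfs ▸ h_anti hms (hms.trans hy.1.le) hy.1.le

section gFun

variable {A x y : ℝ}

noncomputable def gFunDeriv (A x : ℝ) : ℝ :=
  A * (1 - A) * (1 - exp (-x)) / (1 + A * (exp (-x) - 1))

noncomputable def gFunDeriv2 (A x : ℝ) : ℝ :=
  A * (1 - A) * exp (-x) / (1 + A * (exp (-x) - 1)) ^ 2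

theorem one_add_mul_exp_neg_sub_one_pos (hA0 : 0 ≤ A) (hA1 : A ≤ 1) (x : ℝ) :
    0 < 1 + A * (exp (-x) - 1) := by
  rcases le_total (exp (-x)) 1 with h | h <;> nlinarith [exp_pos (-x)]

theorem hasDerivAt_one_add_mul_exp_neg_sub_one (A x : ℝ) :
    HasDerivAt (fun y ↦ 1 + A * (exp (-y) - 1)) (A * -exp (-x)) x := by
  simpa using ((((hasDerivAt_neg x).exp).sub_const 1).const_mul A).const_add 1

theorem hasDerivAt_gFun (hA0 : 0 ≤ A) (hA1 : A ≤ 1) (x : ℝ) :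
    HasDerivAt (gFun A) (gFunDeriv A x) x := by
  have hD := one_add_mul_exp_neg_sub_one_pos hA0 hA1 x
  refine HasDerivAt.congr_deriv (f := gFun A) (((hasDerivAt_id x).const_mul A).add
    ((hasDerivAt_one_add_mul_exp_neg_sub_one A x).log hD.ne')) ?_
  rw [gFunDeriv]
  field_simp
  ring

theorem hasDerivAt_gFunDeriv (hA0 : 0 ≤ A) (hA1 : A ≤ 1) (x : ℝ) :
    HasDerivAt (gFunDeriv A) (gFunDeriv2 A x) x := by
  have hD := one_add_mul_exp_neg_sub_one_pos hA0 hA1 x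
  have hnum : HasDerivAt (fun y ↦ A * (1 - A) * (1 - exp (-y))) (A * (1 - A) * exp (-x)) x := by
    simpa using ((hasDerivAt_const x (1 : ℝ)).sub (hasDerivAt_neg x).exp).const_mul (A * (1 - A))
  refine HasDerivAt.congr_deriv (f := gFunDeriv A)
    (hnum.div (hasDerivAt_one_add_mul_exp_neg_sub_one A x) hD.ne') ?_
  rw [gFunDeriv2]
  field_simp
  ring

theorem continuous_gFunDeriv2 (hA0 : 0 ≤ A) (hA1 : A ≤ 1) : Continuous (gFunDeriv2 A) := by
  unfold gFunDeriv2
  exact Continuous.div (by fun_prop) (by fun_prop)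
    fun x ↦ pow_ne_zero 2 (one_add_mul_exp_neg_sub_one_pos hA0 hA1 x).ne'

theorem gFunDeriv2_zero (A : ℝ) : gFunDeriv2 A 0 = A * (1 - A) := by
  simp [gFunDeriv2]

-- With `t = exp (-x)` and `u = exp (-y)`,
-- `t (1 - A + A u) ^ 2 - u (1 - A + A t) ^ 2 = (t - u) ((1 - A) ^ 2 - A ^ 2 t u)`.
theorem gFunDeriv2_le_gFunDeriv2 (hA0 : 0 ≤ A) (hA1 : A ≤ 1)
    (h : 0 ≤ (exp (-x) - exp (-y)) * ((1 - A) ^ 2 - A ^ 2 * exp (-x) * exp (-y))) :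
    gFunDeriv2 A y ≤ gFunDeriv2 A x := by
  have hDx := one_add_mul_exp_neg_sub_one_pos hA0 hA1 x
  have hDy := one_add_mul_exp_neg_sub_one_pos hA0 hA1 y
  rw [gFunDeriv2, gFunDeriv2, div_le_div_iff₀ (by positivity) (by positivity)]
  linear_combination (A * (1 - A)) * h

theorem mul_exp_neg_log_div (hA0 : 0 < A) (hA1 : A < 1) :
    A * exp (-log (A / (1 - A))) = 1 - A := by
  rw [exp_neg, exp_log (div_pos hA0 (sub_pos.2 hA1))]
  field_simp

theorem mul_one_sub_le_gFunDeriv2 (hA0 : 0 < A) (hA1 : A < 1) (hx0 : 0 ≤ x)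
    (hx : x ≤ log (A / (1 - A))) : A * (1 - A) ≤ gFunDeriv2 A x := by
  have ht1 : exp (-x) ≤ 1 := exp_le_one_iff.2 (neg_nonpos.2 hx0)
  have hAt : 1 - A ≤ A * exp (-x) :=
    mul_exp_neg_log_div hA0 hA1 ▸ mul_le_mul_of_nonneg_left (exp_le_exp.2 (neg_le_neg hx)) hA0.le
  rw [← gFunDeriv2_zero]
  refine gFunDeriv2_le_gFunDeriv2 hA0.le hA1.le (mul_nonneg_of_nonpos_of_nonpos ?_ ?_)
  · simpa using ht1
  · rw [neg_zero, exp_zero, mul_one]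
    nlinarith [mul_le_mul hAt hAt (sub_nonneg.2 hA1.le) (by positivity),
      mul_le_mul_of_nonneg_left ht1 (by positivity : 0 ≤ A ^ 2 * exp (-x))]

theorem gFunDeriv2_antitoneOn (hA0 : 0 < A) (hA1 : A < 1) :
    AntitoneOn (gFunDeriv2 A) (Ici (log (A / (1 - A)))) := by
  intro x hx y _ hxy
  have hAt : A * exp (-x) ≤ 1 - A :=
    mul_exp_neg_log_div hA0 hA1 ▸ mul_le_mul_of_nonneg_left (exp_le_exp.2 (neg_le_neg hx)) hA0.le
  have hAu : A * exp (-y) ≤ 1 - A :=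
    (mul_le_mul_of_nonneg_left (exp_le_exp.2 (neg_le_neg hxy)) hA0.le).trans hAt
  refine gFunDeriv2_le_gFunDeriv2 hA0.le hA1.le (mul_nonneg ?_ ?_)
  · exact sub_nonneg.2 (exp_le_exp.2 (neg_le_neg hxy))
  · nlinarith [mul_le_mul hAt hAu (by positivity) (sub_nonneg.2 hA1.le)]

end gFun

theorem stmt9_general (A B : ℝ) (hA0 : 0 < A) (hA1 : A < 1) :
    ∀ x : ℝ, 0 < x → x ≤ B →
      min (A * (1 - A) / 2) (gFun A B / B ^ 2) * x ^ 2 ≤ gFun A x := by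
  intro x hx0 hxB
  set c := min (A * (1 - A) / 2) (gFun A B / B ^ 2)
  have hB : 0 < B := hx0.trans_le hxB
  have hc : 2 * c ≤ A * (1 - A) := by
    linarith [min_le_left (A * (1 - A) / 2) (gFun A B / B ^ 2)]
  have hcB : c * B ^ 2 ≤ gFun A B := (le_div_iff₀ (by positivity)).1 (min_le_right _ _)
  obtain ⟨s, hs, h_ge, h_le⟩ := exists_crossing_of_antitoneOn hB.le
    (continuous_gFunDeriv2 hA0.le hA1.le).continuousOn (gFunDeriv2_zero A ▸ hc)
    (fun y hy hym ↦ hc.trans (mul_one_sub_le_gFunDeriv2 hA0 hA1 hy.1 hym))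
    (gFunDeriv2_antitoneOn hA0 hA1)
  have hφ (y : ℝ) :
      HasDerivAt (fun z ↦ gFun A z - c * z ^ 2) (gFunDeriv A y - 2 * c * y) y := by
    refine ((hasDerivAt_gFun hA0.le hA1.le y).fun_sub
      ((hasDerivAt_pow 2 y).const_mul c)).congr_deriv ?_
    ring
  have hφ' (y : ℝ) :
      HasDerivAt (fun z ↦ gFunDeriv A z - 2 * c * z) (gFunDeriv2 A y - 2 * c) y := by
    simpa using (hasDerivAt_gFunDeriv hA0.le hA1.le y).fun_sub
      ((hasDerivAt_id y).const_mul (2 * c))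
  have hφ_nonneg := nonneg_of_deriv2_nonneg_of_nonpos hφ hφ' (by simp [gFun])
    (by simp [gFunDeriv]) (by linarith) hs
    (fun y hy ↦ sub_nonneg.2 (h_ge y (Ioo_subset_Icc_self hy)))
    (fun y hy ↦ sub_nonpos.2 (h_le y (Ioo_subset_Ioc_self hy)))
  linarith [hφ_nonneg x ⟨hx0.le, hxB⟩]

theorem stmt9 (A B : ℝ) (hA0 : 0 < A) (hA1 : A < 1) (hB : 0 < B)
    (hBlog : Real.log (A / (1 - A)) < B) :
    ∀ x : ℝ, 0 < x → x ≤ B →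
      min (A * (1 - A) / 2) (gFun A B / B ^ 2) * x ^ 2 ≤ gFun A x :=
  stmt9_general A B hA0 hA1
end

section
/- Let C, M ≥ 1 be natural numbers, a : Fin M → ℝ with a_i > 0 for all i, and b : Fin M → Fin M → ℝ. Let Q be the real square matrix indexed by Fin M × Fin C with entries Q_{(i,k),(j,l)} = b_{i,j} + (if i = j and k = l then a_i else 0). Assume Q is invertible. Then for every orthogonal matrix O and every positive semidefinite matrix S (both indexed by Fin M × Fin C) with Q = O·S, every entry of O − I has absolute value at most (M+1)/C. -/
/-!
Let `P` average each vector over the blocks of size `C`. The columns of `1 - P` have zero block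
sums, so the block-constant part of `Q` annihilates them: `Q (1 - P) = (1 - P) D` with
`D = diag (a_i)`, and likewise for `Qᵀ`. Hence `S² (1 - P) = QᵀQ (1 - P) = (1 - P) D²`; as `S` is
positive semidefinite and `D` is positive, this forces `S (1 - P) = (1 - P) D`, and then
`O (1 - P) = 1 - P`. So every row `d` of `O - 1` is constant on blocks, while orthogonality of `O`
gives `‖d‖² = -2 d_x`. Each value of `d` is repeated `C` times, so `C d_w² ≤ ‖d‖²`, which yields
`|d_w| ≤ 2 / C ≤ (M + 1) / C`.
-/

namespace Matrix

variable {n : Type*} [Fintype n]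

theorem PosSemidef.mulVec_eq_smul_of_mulVec_mulVec_eq {S : Matrix n n ℝ} (hS : S.PosSemidef)
    {r : ℝ} (hr : 0 < r) {v : n → ℝ} (hv : S *ᵥ (S *ᵥ v) = (r ^ 2) • v) :
    S *ᵥ v = r • v := by
  -- `w` would be an eigenvector of `S` for the negative eigenvalue `-r`.
  set w := S *ᵥ v - r • v
  have hSw : S *ᵥ w = -r • w := by
    simp only [w, mulVec_sub, mulVec_smul, hv, smul_sub, smul_smul]
    module
  have hnonneg : 0 ≤ w ⬝ᵥ (S *ᵥ w) := by simpa using hS.dotProduct_mulVec_nonneg w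
  rw [hSw, dotProduct_smul, smul_eq_mul] at hnonneg
  have hw : w ⬝ᵥ w = 0 :=
    le_antisymm (by nlinarith) (Finset.sum_nonneg fun i _ => mul_self_nonneg (w i))
  exact sub_eq_zero.mp (dotProduct_self_eq_zero.mp hw)

theorem PosSemidef.mul_eq_mul_diagonal_of_mul_self_mul {m : Type*} [Fintype m] [DecidableEq m]
    {S : Matrix n n ℝ} (hS : S.PosSemidef) {X : Matrix n m ℝ} {d : m → ℝ} (hd : ∀ j, 0 < d j)
    (h : S * S * X = X * diagonal (fun j => d j ^ 2)) :
    S * X = X * diagonal d := by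
  refine ext_of_mulVec_single fun j => ?_
  have hcol := congrArg (· *ᵥ Pi.single j 1) h
  have hsingle (c : ℝ) : X *ᵥ Pi.single j c = c • (X *ᵥ Pi.single j 1) := by
    rw [← mulVec_smul, ← Pi.single_smul', smul_eq_mul, mul_one]
  simp only [← mulVec_mulVec, diagonal_mulVec_single, mul_one, hsingle (d j ^ 2)] at hcol ⊢
  rw [hsingle (d j)]
  exact hS.mulVec_eq_smul_of_mulVec_mulVec_eq (hd j) hcol

theorem sum_sq_sub_one_apply_eq {R : Type*} [CommRing R] [DecidableEq n] {O : Matrix n n R}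
    (hO : O * Oᵀ = 1) (x : n) :
    ∑ w, (O - 1) x w ^ 2 = -2 * (O - 1) x x := by
  have h : (O - 1) * (O - 1)ᵀ = -(O - 1) - (O - 1)ᵀ := by
    rw [transpose_sub, transpose_one, sub_mul, mul_sub, mul_sub, hO]
    noncomm_ring
  have hx := congrFun (congrFun h x) x
  rw [mul_apply, sub_apply, neg_apply, transpose_apply] at hx
  simp only [transpose_apply, ← sq] at hx
  rw [hx]
  ring

section BlockAverage

variable {ι κ K : Type*} [DecidableEq ι] [Fintype κ] [Field K]

variable (ι κ K) in
def blockAverage : Matrix (ι × κ) (ι × κ) K :=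
  of fun x y => if x.1 = y.1 then (Fintype.card κ : K)⁻¹ else 0

theorem mul_blockAverage_apply_mk_fst [Fintype ι] (A : Matrix (ι × κ) (ι × κ) K) (x y : ι × κ)
    (k : κ) :
    (A * blockAverage ι κ K) x (y.1, k) = (A * blockAverage ι κ K) x y := by
  simp [mul_apply, blockAverage]

variable [Fintype ι]

theorem of_mul_blockAverage (hκ : (Fintype.card κ : K) ≠ 0) (β : ι → ι → K) :
    (of fun x z : ι × κ => β x.1 z.1) * blockAverage ι κ K = of fun x z => β x.1 z.1 := by
  ext x y
  simp only [blockAverage, mul_apply, of_apply, mul_ite, mul_zero, Fintype.sum_prod_type,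
    Finset.sum_ite_irrel, Finset.sum_const, Finset.card_univ, nsmul_eq_mul, Finset.sum_ite_eq',
    Finset.mem_univ, if_true]
  field_simp

variable [DecidableEq κ]

theorem diagonal_mul_blockAverage_comm (α : ι → K) :
    diagonal (fun x : ι × κ => α x.1) * blockAverage ι κ K
      = blockAverage ι κ K * diagonal (fun x => α x.1) := by
  ext x y
  by_cases h : x.1 = y.1 <;> simp [blockAverage, h, mul_comm]

theorem of_add_diagonal_mul_one_sub_blockAverage (hκ : (Fintype.card κ : K) ≠ 0)
    (β : ι → ι → K) (α : ι → K) :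
    ((of fun x z : ι × κ => β x.1 z.1) + diagonal (fun x => α x.1)) * (1 - blockAverage ι κ K)
      = (1 - blockAverage ι κ K) * diagonal (fun x => α x.1) := by
  rw [mul_sub, mul_one, add_mul, of_mul_blockAverage hκ, diagonal_mul_blockAverage_comm, sub_mul,
    one_mul]
  abel

end BlockAverage

end Matrix

theorem card_mul_sq_le_sum_sq {ι κ : Type*} [Fintype ι] [Fintype κ] {d : ι × κ → ℝ}
    (hd : ∀ w k, d (w.1, k) = d w) (w : ι × κ) :
    Fintype.card κ * d w ^ 2 ≤ ∑ z, d z ^ 2 := by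
  calc (Fintype.card κ : ℝ) * d w ^ 2 = ∑ k, d (w.1, k) ^ 2 := by simp [hd]
    _ ≤ ∑ i, ∑ k, d (i, k) ^ 2 :=
      Finset.single_le_sum (f := fun i => ∑ k, d (i, k) ^ 2)
        (fun i _ => Finset.sum_nonneg fun k _ => sq_nonneg _) (Finset.mem_univ w.1)
    _ = ∑ z, d z ^ 2 := by rw [Fintype.sum_prod_type]

theorem abs_le_two_div_card_of_sum_sq_eq {ι κ : Type*} [Fintype ι] [Fintype κ] {d : ι × κ → ℝ}
    (hd : ∀ w k, d (w.1, k) = d w) {x : ι × κ} (hsum : ∑ z, d z ^ 2 = -2 * d x) (w : ι × κ) :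
    |d w| ≤ 2 / Fintype.card κ := by
  have hC : (0 : ℝ) < Fintype.card κ := by
    have : Nonempty κ := ⟨x.2⟩
    exact_mod_cast Fintype.card_pos
  have hx := card_mul_sq_le_sum_sq hd x
  have hw := card_mul_sq_le_sum_sq hd w
  have hdx : Fintype.card κ * -d x ≤ 2 := by
    by_contra! h
    have hneg : 0 < -d x := pos_of_mul_pos_right (by linarith) hC.le
    nlinarith
  have hsq : (Fintype.card κ * d w) ^ 2 ≤ 2 ^ 2 := by
    calc (Fintype.card κ * d w) ^ 2 = Fintype.card κ * (Fintype.card κ * d w ^ 2) := by ring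
      _ ≤ Fintype.card κ * (-2 * d x) := mul_le_mul_of_nonneg_left (hsum ▸ hw) hC.le
      _ = 2 * (Fintype.card κ * -d x) := by ring
      _ ≤ 2 ^ 2 := by linarith
  rw [le_div_iff₀ hC, ← abs_of_pos hC, ← abs_mul, mul_comm]
  simpa using sq_le_sq.mp hsq

open Matrix

theorem stmt12_general (C M : ℕ) (hC : 1 ≤ C) (hM : 1 ≤ M)
    (a : Fin M → ℝ) (ha : ∀ i, 0 < a i) (b : Fin M → Fin M → ℝ)
    (Q : Matrix (Fin M × Fin C) (Fin M × Fin C) ℝ)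
    (hQ : ∀ i k j l, Q (i, k) (j, l) = b i j + if i = j ∧ k = l then a i else 0)
    (O S : Matrix (Fin M × Fin C) (Fin M × Fin C) ℝ)
    (hO : Oᵀ * O = 1) (hS : S.PosSemidef) (hQOS : Q = O * S) :
    ∀ x y, |(O - 1) x y| ≤ ((M : ℝ) + 1) / C := by
  intro x y
  set P := blockAverage (Fin M) (Fin C) ℝ
  set D := diagonal fun z : Fin M × Fin C => a z.1
  have hcard : (Fintype.card (Fin C) : ℝ) ≠ 0 := by
    rw [Fintype.card_fin, Nat.cast_ne_zero]; omega
  have hQ_eq : Q = (of fun z w : Fin M × Fin C => b z.1 w.1) + D := by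
    ext ⟨i, k⟩ ⟨j, l⟩
    simp [hQ, D, diagonal_apply, Prod.ext_iff]
  have hQP : Q * (1 - P) = (1 - P) * D :=
    hQ_eq ▸ of_add_diagonal_mul_one_sub_blockAverage hcard b a
  have hQTP : Qᵀ * (1 - P) = (1 - P) * D := by
    rw [hQ_eq, transpose_add, diagonal_transpose]
    exact of_add_diagonal_mul_one_sub_blockAverage hcard (fun i j => b j i) a
  have hSS : S * S = Qᵀ * Q := by
    have hST : Sᵀ = S := by simpa [conjTranspose_eq_transpose_of_trivial] using hS.1.eq
    calc S * S = Sᵀ * (Oᵀ * O) * S := by rw [hO, hST, mul_one]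
      _ = (O * S)ᵀ * (O * S) := by rw [transpose_mul]; noncomm_ring
      _ = Qᵀ * Q := by rw [hQOS]
  have hSP : S * (1 - P) = (1 - P) * D := by
    refine hS.mul_eq_mul_diagonal_of_mul_self_mul (fun z => ha z.1) ?_
    rw [hSS, mul_assoc, hQP, ← mul_assoc, hQTP, mul_assoc, diagonal_mul_diagonal]
    simp [sq]
  have hOP : O * (1 - P) = 1 - P := by
    have hD : IsUnit D := isUnit_diagonal.mpr (Pi.isUnit_iff.mpr fun z => (ha z.1).ne'.isUnit)
    rw [← hD.mul_left_inj, mul_assoc, ← hSP, ← mul_assoc, ← hQOS, hQP, hSP]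
  have hrow_block : ∀ w k, (O - 1) x (w.1, k) = (O - 1) x w := by
    have h : (O - 1) * (1 - P) = 0 := by rw [sub_mul, one_mul, hOP, sub_self]
    rw [mul_sub, mul_one, sub_eq_zero] at h
    intro w k
    rw [h]
    exact mul_blockAverage_apply_mk_fst _ _ _ _
  have hrow_norm : ∑ w, (O - 1) x w ^ 2 = -2 * (O - 1) x x :=
    sum_sq_sub_one_apply_eq (mul_eq_one_comm.mp hO) x
  calc |(O - 1) x y| ≤ 2 / Fintype.card (Fin C) :=
        abs_le_two_div_card_of_sum_sq_eq (d := fun w => (O - 1) x w) hrow_block hrow_norm y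
    _ ≤ ((M : ℝ) + 1) / C := by
      rw [Fintype.card_fin]
      gcongr
      norm_cast
      omega

theorem stmt12 (C M : ℕ) (hC : 1 ≤ C) (hM : 1 ≤ M)
    (a : Fin M → ℝ) (ha : ∀ i, 0 < a i) (b : Fin M → Fin M → ℝ)
    (Q : Matrix (Fin M × Fin C) (Fin M × Fin C) ℝ)
    (hQ : ∀ i k j l, Q (i, k) (j, l) = b i j + if i = j ∧ k = l then a i else 0)
    (hQinv : IsUnit Q)
    (O S : Matrix (Fin M × Fin C) (Fin M × Fin C) ℝ)
    (hO : Oᵀ * O = 1) (hS : S.PosSemidef) (hQOS : Q = O * S) :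
    ∀ x y, |(O - 1) x y| ≤ ((M : ℝ) + 1) / C :=
  stmt12_general C M hC hM a ha b Q hQ O S hO hS hQOS
end

section
/- Let C, M ≥ 1 be natural numbers, a : Fin M → ℝ with a_i ≠ 0 for all i, and b : Fin M → Fin M → ℝ. Let Q be the real square matrix indexed by Fin M × Fin C with entries Q_{(i,k),(j,l)} = b_{i,j} + (if i = j and k = l then a_i else 0), and let D be the matrix with D_{(i,k),(j,l)} = sign(a_i) if i = j and k = l, and 0 otherwise. Assume Q is invertible. Then for every orthogonal matrix O and every positive semidefinite matrix S with Q = O·S, every entry of O − D has absolute value at most (M+1)/C. -/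
/-! With `P` the averaging projection on `ℝ^C`, `Q = diag a ⊗ (1 - P) + Q' ⊗ P` for
`Q' = diag a + C • b`, and the two summands act on the complementary subspaces `ℝ^M ⊗ ker P` and
`ℝ^M ⊗ range P`. Gluing the polar decompositions `diag a = diag (sign a) · diag |a|` and
`Q' = O' S'` along this splitting gives a polar decomposition of `Q`, so by uniqueness of the
orthogonal polar factor of an invertible matrix `O = diag (sign a) ⊗ (1 - P) + O' ⊗ P`. Since
`D = diag (sign a) ⊗ 1`, this leaves `O - D = (O' - diag (sign a)) ⊗ P`, whose entries are
differences of entries of two orthogonal matrices divided by `C`, hence at most `2 / C`. -/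

open Matrix Kronecker

namespace Matrix

variable {𝕜 m n : Type*} [RCLike 𝕜]

section Polar

variable [Fintype n] [DecidableEq n]

open scoped MatrixOrder ComplexOrder

lemma conjTranspose_mul_self_of_unitary_mul {U S : Matrix n n 𝕜} (hU : U ∈ unitaryGroup n 𝕜)
    (hS : S.IsHermitian) : (U * S)ᴴ * (U * S) = S * S := by
  rw [conjTranspose_mul, hS.eq, mul_assoc, ← mul_assoc Uᴴ, ← star_eq_conjTranspose,
    (mem_unitaryGroup_iff' (A := U)).mp hU, one_mul]

theorem exists_unitary_mul_posSemidef_of_isUnit {Q : Matrix n n 𝕜} (hQ : IsUnit Q) :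
    ∃ U S : Matrix n n 𝕜, U ∈ unitaryGroup n 𝕜 ∧ S.PosSemidef ∧ U * S = Q := by
  set S := CFC.sqrt (Qᴴ * Q)
  have hS : S.PosSemidef := (CFC.sqrt_nonneg _).posSemidef
  have hSS : S * S = Qᴴ * Q :=
    CFC.sqrt_mul_sqrt_self _ (posSemidef_conjTranspose_mul_self Q).nonneg
  have hSdet : IsUnit S.det := (isUnit_iff_isUnit_det S).mp <|
    isUnit_of_mul_isUnit_left (hSS ▸ (hQ.star.mul hQ : IsUnit (star Q * Q)))
  refine ⟨Q * S⁻¹, S, ?_, hS, nonsing_inv_mul_cancel_right S Q hSdet⟩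
  rw [mem_unitaryGroup_iff', star_eq_conjTranspose, conjTranspose_mul, conjTranspose_nonsing_inv,
    hS.isHermitian.eq, mul_assoc, ← mul_assoc Qᴴ, ← hSS, ← mul_assoc, ← mul_assoc,
    nonsing_inv_mul S hSdet, one_mul, mul_nonsing_inv S hSdet]

theorem eq_of_unitary_mul_posSemidef_eq {Q U U' S S' : Matrix n n 𝕜} (hQ : IsUnit Q)
    (hU : U ∈ unitaryGroup n 𝕜) (hU' : U' ∈ unitaryGroup n 𝕜) (hS : S.PosSemidef)
    (hS' : S'.PosSemidef) (h : U * S = Q) (h' : U' * S' = Q) : U = U' := by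
  have hSS' : S = S' := by
    rw [← CFC.mul_self_eq_mul_self_iff S S' hS.nonneg hS'.nonneg,
      ← conjTranspose_mul_self_of_unitary_mul hU hS.isHermitian,
      ← conjTranspose_mul_self_of_unitary_mul hU' hS'.isHermitian, h, h']
  subst hSS'
  exact (isUnit_of_mul_isUnit_right (h ▸ hQ)).mul_left_injective (h.trans h'.symm)

end Polar

def kroneckerSplit [DecidableEq n] (P : Matrix n n 𝕜) (X Y : Matrix m m 𝕜) :
    Matrix (m × n) (m × n) 𝕜 :=
  X ⊗ₖ (1 - P) + Y ⊗ₖ P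

section kroneckerSplit

variable [DecidableEq n] {P : Matrix n n 𝕜} {X X' Y Y' : Matrix m m 𝕜}

lemma kroneckerSplit_apply (P : Matrix n n 𝕜) (X Y : Matrix m m 𝕜) (i j : m) (k l : n) :
    kroneckerSplit P X Y (i, k) (j, l) =
      X i j * ((1 : Matrix n n 𝕜) k l - P k l) + Y i j * P k l :=
  rfl

lemma kroneckerSplit_self (P : Matrix n n 𝕜) (X : Matrix m m 𝕜) :
    kroneckerSplit P X X = X ⊗ₖ 1 := by
  rw [kroneckerSplit, ← kronecker_add, sub_add_cancel]

lemma kroneckerSplit_sub (P : Matrix n n 𝕜) (X X' Y Y' : Matrix m m 𝕜) :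
    kroneckerSplit P X Y - kroneckerSplit P X' Y' = kroneckerSplit P (X - X') (Y - Y') := by
  ext ⟨i, k⟩ ⟨j, l⟩
  simp only [sub_apply, kroneckerSplit_apply]
  ring

lemma conjTranspose_kroneckerSplit (hP : IsSelfAdjoint P) :
    (kroneckerSplit P X Y)ᴴ = kroneckerSplit P Xᴴ Yᴴ := by
  rw [kroneckerSplit, kroneckerSplit, conjTranspose_add, conjTranspose_kronecker,
    conjTranspose_kronecker, conjTranspose_sub, conjTranspose_one, ← star_eq_conjTranspose P,
    hP.star_eq]

variable [Fintype m] [Fintype n]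

lemma kroneckerSplit_mul (hP : IsIdempotentElem P) :
    kroneckerSplit P X Y * kroneckerSplit P X' Y' = kroneckerSplit P (X * X') (Y * Y') := by
  have hPK : P * (1 - P) = 0 := by rw [mul_sub, mul_one, hP.eq, sub_self]
  have hKP : (1 - P) * P = 0 := by rw [sub_mul, one_mul, hP.eq, sub_self]
  simp only [kroneckerSplit, add_mul, mul_add, ← mul_kronecker_mul, hP.one_sub.eq, hP.eq, hPK,
    hKP, kronecker_zero, add_zero, zero_add]

lemma kroneckerSplit_mem_unitaryGroup [DecidableEq m] (hP : IsStarProjection P)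
    (hX : X ∈ unitaryGroup m 𝕜) (hY : Y ∈ unitaryGroup m 𝕜) :
    kroneckerSplit P X Y ∈ unitaryGroup (m × n) 𝕜 := by
  rw [mem_unitaryGroup_iff'] at hX hY ⊢
  rw [star_eq_conjTranspose, conjTranspose_kroneckerSplit hP.isSelfAdjoint,
    kroneckerSplit_mul hP.isIdempotentElem, ← star_eq_conjTranspose, ← star_eq_conjTranspose, hX,
    hY, kroneckerSplit_self, one_kronecker_one]

open scoped MatrixOrder ComplexOrder in
lemma PosSemidef.kroneckerSplit (hP : IsStarProjection P) (hX : X.PosSemidef)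
    (hY : Y.PosSemidef) : (kroneckerSplit P X Y).PosSemidef :=
  (hX.kronecker hP.one_sub.nonneg.posSemidef).add (hY.kronecker hP.nonneg.posSemidef)

lemma isUnit_of_isUnit_kroneckerSplit [DecidableEq m] (hP : IsIdempotentElem P) (hP0 : P ≠ 0)
    (h : IsUnit (kroneckerSplit P X Y)) : IsUnit Y := by
  by_contra hY
  obtain ⟨v, hv0, hYv⟩ := exists_mulVec_eq_zero_iff.mpr <| by
    simpa [isUnit_iff_isUnit_det Y, isUnit_iff_ne_zero] using hY
  set V : Matrix m m 𝕜 := of fun i _ => v i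
  have hYV : Y * V = 0 := by
    ext i j
    simpa [V, mul_apply, mulVec, dotProduct] using congrFun hYv i
  have hVP : kroneckerSplit P 0 V = 0 := h.mul_left_cancel <| by
    rw [kroneckerSplit_mul hP, mul_zero, hYV, mul_zero, kroneckerSplit_self, zero_kronecker]
  obtain ⟨i, hi⟩ : ∃ i, v i ≠ 0 := Function.ne_iff.mp hv0
  obtain ⟨k, l, hkl⟩ : ∃ k l, P k l ≠ 0 := by
    by_contra! hP0'
    exact hP0 (ext hP0')
  have := congrFun (congrFun hVP (i, k)) (i, l)
  simp [kroneckerSplit_apply, V, hkl] at this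
  exact hi this

open scoped ComplexOrder in
lemma eq_kroneckerSplit_of_unitary_mul_posSemidef [DecidableEq m] (hP : IsStarProjection P)
    {U V A B : Matrix m m 𝕜} {O S : Matrix (m × n) (m × n) 𝕜} (hXY : IsUnit (kroneckerSplit P X Y))
    (hU : U ∈ unitaryGroup m 𝕜) (hA : A.PosSemidef) (hUA : U * A = X)
    (hV : V ∈ unitaryGroup m 𝕜) (hB : B.PosSemidef) (hVB : V * B = Y)
    (hO : O ∈ unitaryGroup (m × n) 𝕜) (hS : S.PosSemidef) (hOS : O * S = kroneckerSplit P X Y) :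
    O = kroneckerSplit P U V :=
  eq_of_unitary_mul_posSemidef_eq hXY hO (kroneckerSplit_mem_unitaryGroup hP hU hV) hS
    (PosSemidef.kroneckerSplit hP hA hB) hOS
    (by rw [kroneckerSplit_mul hP.isIdempotentElem, hUA, hVB])

end kroneckerSplit

def avgProj (n : Type*) [Fintype n] : Matrix n n 𝕜 := (Fintype.card n : 𝕜)⁻¹ • of fun _ _ => 1

section avgProj

variable [Fintype n]

@[simp]
lemma avgProj_apply (i j : n) : avgProj (𝕜 := 𝕜) n i j = (Fintype.card n : 𝕜)⁻¹ := by
  simp [avgProj]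

variable [Nonempty n]

lemma isStarProjection_avgProj : IsStarProjection (avgProj (𝕜 := 𝕜) n) where
  isIdempotentElem := by
    ext i j
    simp [mul_apply]
  isSelfAdjoint := by
    ext i j
    simp

lemma avgProj_ne_zero : avgProj (𝕜 := 𝕜) n ≠ 0 := fun h => by
  simpa using congrFun (congrFun h (Classical.arbitrary n)) (Classical.arbitrary n)

lemma kronecker_one_add_kronecker_ones_eq_kroneckerSplit [DecidableEq n] (A B : Matrix m m 𝕜) :
    A ⊗ₖ 1 + B ⊗ₖ of (fun _ _ => 1) =
      kroneckerSplit (avgProj n) A (A + (Fintype.card n : 𝕜) • B) := by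
  rw [kroneckerSplit, add_kronecker, ← add_assoc, ← kronecker_add, sub_add_cancel, smul_kronecker,
    ← kronecker_smul, avgProj, smul_smul, mul_inv_cancel₀ (by simp), one_smul]

end avgProj

lemma norm_sub_kroneckerSplit_avgProj_apply_le [Fintype m] [DecidableEq m] [Fintype n]
    [DecidableEq n] {X U V : Matrix m m 𝕜} (hU : U ∈ unitaryGroup m 𝕜)
    (hV : V ∈ unitaryGroup m 𝕜) (p q : m × n) :
    ‖(kroneckerSplit (avgProj n) X U - kroneckerSplit (avgProj n) X V) p q‖ ≤
      2 / Fintype.card n := by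
  obtain ⟨i, k⟩ := p
  obtain ⟨j, l⟩ := q
  rw [kroneckerSplit_sub, kroneckerSplit_apply, sub_self, Matrix.zero_apply, zero_mul, zero_add,
    avgProj_apply, norm_mul, norm_inv, RCLike.norm_natCast, div_eq_mul_inv]
  gcongr
  exact (norm_sub_le _ _).trans <| by
    linarith [entry_norm_bound_of_unitary hU i j, entry_norm_bound_of_unitary hV i j]

lemma diagonal_sign_mem_unitaryGroup [Fintype n] [DecidableEq n] {a : n → ℝ}
    (ha : ∀ i, a i ≠ 0) : diagonal (fun i => Real.sign (a i)) ∈ unitaryGroup n ℝ := by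
  rw [mem_unitaryGroup_iff', star_eq_conjTranspose, diagonal_conjTranspose, diagonal_mul_diagonal,
    ← diagonal_one]
  congr with i
  rcases Real.sign_apply_eq_of_ne_zero _ (ha i) with h | h <;> simp [h]

lemma diagonal_sign_mul_diagonal_abs [Fintype n] [DecidableEq n] (a : n → ℝ) :
    diagonal (fun i => Real.sign (a i)) * diagonal (fun i => |a i|) = diagonal a := by
  rw [diagonal_mul_diagonal]
  congr with i
  rcases lt_trichotomy (a i) 0 with h | h | h
  · simp [Real.sign_of_neg h, abs_of_neg h]
  · simp [h]
  · simp [Real.sign_of_pos h, abs_of_pos h]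

end Matrix

theorem stmt13_general (C M : ℕ)
    (a : Fin M → ℝ) (ha : ∀ i, a i ≠ 0) (b : Fin M → Fin M → ℝ)
    (Q : Matrix (Fin M × Fin C) (Fin M × Fin C) ℝ)
    (hQ : ∀ i k j l, Q (i, k) (j, l) = b i j + if i = j ∧ k = l then a i else 0)
    (D : Matrix (Fin M × Fin C) (Fin M × Fin C) ℝ)
    (hD : ∀ i k j l, D (i, k) (j, l) = if i = j ∧ k = l then Real.sign (a i) else 0)
    (hQinv : IsUnit Q)
    (O S : Matrix (Fin M × Fin C) (Fin M × Fin C) ℝ)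
    (hO : Oᵀ * O = 1) (hS : S.PosSemidef) (hQOS : Q = O * S) :
    ∀ x y, |(O - D) x y| ≤ ((M : ℝ) + 1) / C := by
  rintro ⟨i, k⟩ ⟨j, l⟩
  have : Nonempty (Fin C) := ⟨k⟩
  set P : Matrix (Fin C) (Fin C) ℝ := avgProj (Fin C)
  have hP : IsStarProjection P := isStarProjection_avgProj
  set sgn := diagonal fun i => Real.sign (a i)
  have hQsplit :
      Q = kroneckerSplit P (diagonal a) (diagonal a + (Fintype.card (Fin C) : ℝ) • of b) := by
    rw [← kronecker_one_add_kronecker_ones_eq_kroneckerSplit]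
    ext ⟨i, k⟩ ⟨j, l⟩
    by_cases hij : i = j <;> by_cases hkl : k = l <;> simp [hQ, hij, hkl, one_apply, add_comm]
  have hD' : D = kroneckerSplit P sgn sgn := by
    ext ⟨i, k⟩ ⟨j, l⟩
    rw [hD, kroneckerSplit_self]
    by_cases hij : i = j <;> by_cases hkl : k = l <;> simp [sgn, hij, hkl]
  rw [hQsplit] at hQinv hQOS
  obtain ⟨O', S', hO', hS', hO'S'⟩ := exists_unitary_mul_posSemidef_of_isUnit <|
    isUnit_of_isUnit_kroneckerSplit hP.isIdempotentElem avgProj_ne_zero hQinv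
  have hOunit : O ∈ unitaryGroup _ ℝ := by
    rwa [mem_unitaryGroup_iff', star_eq_conjTranspose, conjTranspose_eq_transpose_of_trivial]
  have hOO : O = kroneckerSplit P sgn O' :=
    eq_kroneckerSplit_of_unitary_mul_posSemidef hP hQinv (diagonal_sign_mem_unitaryGroup ha)
      (PosSemidef.diagonal fun i => abs_nonneg (a i)) (diagonal_sign_mul_diagonal_abs a) hO' hS'
      hO'S' hOunit hS hQOS.symm
  have hM1 : (1 : ℝ) ≤ M := by exact_mod_cast i.pos
  calc |(O - D) (i, k) (j, l)| ≤ 2 / Fintype.card (Fin C) := by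
        rw [hOO, hD']
        exact norm_sub_kroneckerSplit_avgProj_apply_le hO' (diagonal_sign_mem_unitaryGroup ha) _ _
    _ ≤ ((M : ℝ) + 1) / C := by
        rw [Fintype.card_fin]
        gcongr
        linarith

theorem stmt13 (C M : ℕ) (hC : 1 ≤ C) (hM : 1 ≤ M)
    (a : Fin M → ℝ) (ha : ∀ i, a i ≠ 0) (b : Fin M → Fin M → ℝ)
    (Q : Matrix (Fin M × Fin C) (Fin M × Fin C) ℝ)
    (hQ : ∀ i k j l, Q (i, k) (j, l) = b i j + if i = j ∧ k = l then a i else 0)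
    (D : Matrix (Fin M × Fin C) (Fin M × Fin C) ℝ)
    (hD : ∀ i k j l, D (i, k) (j, l) = if i = j ∧ k = l then Real.sign (a i) else 0)
    (hQinv : IsUnit Q)
    (O S : Matrix (Fin M × Fin C) (Fin M × Fin C) ℝ)
    (hO : Oᵀ * O = 1) (hS : S.PosSemidef) (hQOS : Q = O * S) :
    ∀ x y, |(O - D) x y| ≤ ((M : ℝ) + 1) / C :=
  stmt13_general C M a ha b Q hQ D hD hQinv O S hO hS hQOS
end

section
/- Let K ≥ 2 and c ∈ ℝ, and let W = c · Ẽ·(2·I_K − J_K)·Eᵀ, where I_K is the identity and J_K the all-ones K×K matrix. Then the noiseless cross-entropy loss satisfies L(W) = log(1 + (K−1)·exp(−2c)); in particular, L(c·Ẽ(2I_K − J_K)Eᵀ) → 0 as c → ∞. -/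
open Matrix Real Filter

/-- The K×K all-ones matrix `J_K`. -/
def allOnes (K : ℕ) : Matrix (Fin K) (Fin K) ℝ := Matrix.of fun _ _ => (1 : ℝ)

/-! Orthonormality of `E` and `Ẽ` cancels the embeddings, so the logits are `c(2I − J)`:
`c` on the diagonal and `−c` off it. Every column then has softmax denominator
`e^c (1 + (K−1) e^{−2c})`, so each diagonal log-probability is `−log (1 + (K−1) e^{−2c})`,
and averaging against `p` leaves exactly this value. -/

theorem lossNoiseless_conj {K : ℕ} {E Et : Matrix (Fin K) (Fin K) ℝ} (hE : Eᵀ * E = 1)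
    (hEt : Etᵀ * Et = 1) (p : Fin K → ℝ) (A : Matrix (Fin K) (Fin K) ℝ) :
    lossNoiseless E Et p (Et * A * Eᵀ) = lossNoiseless 1 1 p A := by
  have hA : Etᵀ * (Et * A * Eᵀ) * E = 1ᵀ * A * 1 := by
    rw [transpose_one, Matrix.one_mul, Matrix.mul_one, Matrix.mul_assoc, Matrix.mul_assoc,
      hE, Matrix.mul_one, ← Matrix.mul_assoc, hEt, Matrix.one_mul]
  simp only [lossNoiseless, predProb, hA]

theorem smul_two_smul_one_sub_allOnes_apply {K : ℕ} (c : ℝ) (i j : Fin K) :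
    (c • ((2 : ℝ) • 1 - allOnes K)) i j = if i = j then c else -c := by
  by_cases h : i = j
  · simp [h, allOnes]
    ring
  · simp [h, allOnes]

theorem sum_exp_ite_eq {K : ℕ} (c : ℝ) (j : Fin K) :
    ∑ l : Fin K, exp (if l = j then c else -c) = exp c * (1 + (K - 1) * exp (-(2 * c))) := by
  have hsplit : ∀ l : Fin K,
      exp (if l = j then c else -c) = exp (-c) + if l = j then exp c - exp (-c) else 0 := by
    intro l
    split_ifs <;> ring
  have hexp : exp c * exp (-(2 * c)) = exp (-c) := by rw [← exp_add]; ring_nf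
  simp only [hsplit, Finset.sum_add_distrib, Finset.sum_const, Finset.card_univ,
    Fintype.card_fin, nsmul_eq_mul, Finset.sum_ite_eq', Finset.mem_univ, if_true]
  linear_combination (1 - (K : ℝ)) * hexp

theorem log_predProb_smul_two_smul_one_sub_allOnes {K : ℕ} (c : ℝ) (j : Fin K) :
    log (predProb 1 1 (c • ((2 : ℝ) • 1 - allOnes K)) j j)
      = -log (1 + (K - 1) * exp (-(2 * c))) := by
  simp only [predProb, transpose_one, Matrix.one_mul, Matrix.mul_one,
    smul_two_smul_one_sub_allOnes_apply, if_true, sum_exp_ite_eq,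
    div_mul_cancel_left₀ (exp_ne_zero c), log_inv]

theorem lossNoiseless_smul_two_smul_one_sub_allOnes {K : ℕ} {p : Fin K → ℝ}
    (hp1 : ∑ j, p j = 1) (c : ℝ) :
    lossNoiseless 1 1 p (c • ((2 : ℝ) • 1 - allOnes K))
      = log (1 + (K - 1) * exp (-(2 * c))) := by
  simp only [lossNoiseless, log_predProb_smul_two_smul_one_sub_allOnes, mul_neg,
    Finset.sum_neg_distrib, neg_neg, ← Finset.sum_mul, hp1, one_mul]

theorem tendsto_log_one_add_mul_exp_neg_two_mul (a : ℝ) :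
    Tendsto (fun c : ℝ => log (1 + a * exp (-(2 * c)))) atTop (nhds 0) := by
  have hexp : Tendsto (fun c : ℝ => exp (-(2 * c))) atTop (nhds 0) :=
    tendsto_exp_atBot.comp <| tendsto_neg_atTop_atBot.comp <|
      tendsto_id.const_mul_atTop two_pos
  have hinner : Tendsto (fun c : ℝ => 1 + a * exp (-(2 * c))) atTop (nhds 1) := by
    simpa using (hexp.const_mul a).const_add 1
  simpa [Function.comp_def] using (continuousAt_log one_ne_zero).tendsto.comp hinner

theorem stmt15_general {K : ℕ}
    (E Et : Matrix (Fin K) (Fin K) ℝ)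
    (hE : Eᵀ * E = 1) (hEt : Etᵀ * Et = 1)
    (p : Fin K → ℝ) (hp1 : ∑ j, p j = 1) :
    (∀ c : ℝ,
      lossNoiseless E Et p (c • (Et * ((2 : ℝ) • 1 - allOnes K) * Eᵀ))
        = Real.log (1 + (K - 1) * Real.exp (-(2 * c)))) ∧
    Tendsto (fun c : ℝ => lossNoiseless E Et p (c • (Et * ((2 : ℝ) • 1 - allOnes K) * Eᵀ)))
      atTop (nhds 0) := by
  have hloss : ∀ c : ℝ,
      lossNoiseless E Et p (c • (Et * ((2 : ℝ) • 1 - allOnes K) * Eᵀ))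
        = log (1 + (K - 1) * exp (-(2 * c))) := by
    intro c
    rw [← Matrix.smul_mul, ← Matrix.mul_smul, lossNoiseless_conj hE hEt,
      lossNoiseless_smul_two_smul_one_sub_allOnes hp1]
  exact ⟨hloss, (tendsto_log_one_add_mul_exp_neg_two_mul _).congr fun c => (hloss c).symm⟩

theorem stmt15 {K : ℕ} (hK : 2 ≤ K)
    (E Et : Matrix (Fin K) (Fin K) ℝ)
    (hE : Eᵀ * E = 1) (hEt : Etᵀ * Et = 1)
    (p : Fin K → ℝ) (hp : ∀ j, 0 < p j) (hp1 : ∑ j, p j = 1) :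
    (∀ c : ℝ,
      lossNoiseless E Et p (c • (Et * ((2 : ℝ) • 1 - allOnes K) * Eᵀ))
        = Real.log (1 + (K - 1) * Real.exp (-(2 * c)))) ∧
    Tendsto (fun c : ℝ => lossNoiseless E Et p (c • (Et * ((2 : ℝ) • 1 - allOnes K) * Eᵀ)))
      atTop (nhds 0) :=
  stmt15_general E Et hE hEt p hp1
end

section
/- Let K ≥ 2, α ∈ [0,1), c ∈ ℝ, and W = c · Ẽ·(2·I_K − J_K)·Eᵀ. Then the noisy cross-entropy loss satisfies exactly L(W) = log(1 + (K−1)·exp(−2c)) + 2·α·c·(K−1)/K, and consequently for all c ≥ 0, L(W) ≤ (K−1)·exp(−2c) + 2·α·c. -/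
/-!
Orthonormality of `E` and `Ẽ` turns `Ẽᵀ W E` into `c (2I − J)`, so every column of logits is `c` on
the diagonal and `−c` off it. Dividing by `e^c`, the softmax column is `1` resp. `e^{−2c}` over
`1 + (K − 1) e^{−2c}`, and the noisy targets put mass `α (K − 1) / K` off the diagonal, which gives
the closed form. The bound follows from `log (1 + x) ≤ x` and `(K − 1) / K ≤ 1`.
-/

open Matrix Real Filter

theorem sum_ite_eq_add_card_sub_one_mul {ι R : Type*} [Fintype ι] [DecidableEq ι] [Ring R]
    (j : ι) (a b : R) :
    ∑ l, (if l = j then a else b) = a + ((Fintype.card ι : R) - 1) * b := by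
  rw [Fintype.sum_eq_add_sum_compl j, if_pos rfl,
    Finset.sum_congr rfl fun l hl => if_neg (Finset.mem_compl.mp hl ∘ Finset.mem_singleton.mpr)]
  simp [Finset.card_compl, Nat.cast_sub (Fintype.card_pos_iff.mpr ⟨j⟩)]

theorem sum_pcond_mul_ite {K : ℕ} (α : ℝ) (j : Fin K) (a b : ℝ) :
    ∑ i, pcond K α i j * (if i = j then a else b)
      = (1 - α + α / K) * a + (K - 1) * (α / K * b) := by
  have h : ∀ i, pcond K α i j * (if i = j then a else b)
      = if i = j then (1 - α + α / K) * a else α / K * b := by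
    intro i; unfold pcond; split_ifs <;> rfl
  simp only [h, sum_ite_eq_add_card_sub_one_mul, Fintype.card_fin]

theorem two_smul_one_sub_allOnes_apply {K : ℕ} (i j : Fin K) :
    ((2 : ℝ) • 1 - allOnes K) i j = if i = j then 1 else -1 := by
  by_cases h : i = j <;> simp [allOnes, h]; norm_num

theorem transpose_mul_conj_mul_eq {n R : Type*} [Fintype n] [DecidableEq n] [CommSemiring R]
    {E Et : Matrix n n R} (hE : Eᵀ * E = 1) (hEt : Etᵀ * Et = 1) (c : R) (A : Matrix n n R) :
    Etᵀ * (c • (Et * A * Eᵀ)) * E = c • A := by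
  simp only [Matrix.mul_smul, Matrix.smul_mul, Matrix.mul_assoc, hE, Matrix.mul_one]
  rw [← Matrix.mul_assoc, hEt, Matrix.one_mul]

section TwoLevelLogits

variable {K : ℕ} {E Et W : Matrix (Fin K) (Fin K) ℝ} {c : ℝ}

theorem one_add_mul_exp_pos (j : Fin K) : 0 < 1 + ((K : ℝ) - 1) * exp (-(2 * c)) := by
  have hK : (1 : ℝ) ≤ K := Nat.one_le_cast.mpr j.pos
  have := exp_pos (-(2 * c))
  nlinarith

theorem predProb_eq_of_logits (hW : Etᵀ * W * E = c • ((2 : ℝ) • 1 - allOnes K)) (i j : Fin K) :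
    predProb E Et W i j
      = (if i = j then 1 else exp (-(2 * c))) / (1 + ((K : ℝ) - 1) * exp (-(2 * c))) := by
  have hexp : ∀ l, exp ((Etᵀ * W * E) l j) = exp c * (if l = j then 1 else exp (-(2 * c))) := by
    intro l
    rw [hW, Matrix.smul_apply, two_smul_one_sub_allOnes_apply, smul_eq_mul]
    split_ifs
    · simp
    · rw [← exp_add]; ring_nf
  simp only [predProb, hexp, ← Finset.mul_sum, sum_ite_eq_add_card_sub_one_mul, Fintype.card_fin]
  exact mul_div_mul_left _ _ (exp_ne_zero c)

theorem log_predProb_eq_of_logits (hW : Etᵀ * W * E = c • ((2 : ℝ) • 1 - allOnes K))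
    (i j : Fin K) :
    log (predProb E Et W i j)
      = if i = j then -log (1 + ((K : ℝ) - 1) * exp (-(2 * c)))
        else -(2 * c) - log (1 + ((K : ℝ) - 1) * exp (-(2 * c))) := by
  rw [predProb_eq_of_logits hW, log_div _ (one_add_mul_exp_pos j).ne']
  · split_ifs <;> simp
  · split_ifs <;> simp [exp_ne_zero]

theorem lossNoisy_eq_of_logits {p : Fin K → ℝ} (hp1 : ∑ j, p j = 1) (α : ℝ)
    (hW : Etᵀ * W * E = c • ((2 : ℝ) • 1 - allOnes K)) :
    lossNoisy E Et p α W
      = log (1 + ((K : ℝ) - 1) * exp (-(2 * c))) + 2 * α * c * ((K : ℝ) - 1) / K := by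
  have hinner : ∀ j, ∑ i, pcond K α i j * log (predProb E Et W i j)
      = -(log (1 + ((K : ℝ) - 1) * exp (-(2 * c))) + 2 * α * c * ((K : ℝ) - 1) / K) := by
    intro j
    have hK : (K : ℝ) ≠ 0 := Nat.cast_ne_zero.mpr j.pos.ne'
    simp only [log_predProb_eq_of_logits hW, sum_pcond_mul_ite]
    field_simp
    ring
  simp only [lossNoisy, hinner, ← Finset.sum_mul, hp1]
  ring

end TwoLevelLogits

theorem stmt16_general {K : ℕ} (hK : 2 ≤ K) (α : ℝ) (hα0 : 0 ≤ α)
    (E Et : Matrix (Fin K) (Fin K) ℝ)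
    (hE : Eᵀ * E = 1) (hEt : Etᵀ * Et = 1)
    (p : Fin K → ℝ) (hp1 : ∑ j, p j = 1) :
    (∀ c : ℝ,
      lossNoisy E Et p α (c • (Et * ((2 : ℝ) • 1 - allOnes K) * Eᵀ))
        = Real.log (1 + (K - 1) * Real.exp (-(2 * c))) + 2 * α * c * (K - 1) / K) ∧
    (∀ c : ℝ, 0 ≤ c →
      lossNoisy E Et p α (c • (Et * ((2 : ℝ) • 1 - allOnes K) * Eᵀ))
        ≤ (K - 1) * Real.exp (-(2 * c)) + 2 * α * c) := by
  have hloss : ∀ c : ℝ, lossNoisy E Et p α (c • (Et * ((2 : ℝ) • 1 - allOnes K) * Eᵀ))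
      = log (1 + (K - 1) * exp (-(2 * c))) + 2 * α * c * (K - 1) / K :=
    fun c => lossNoisy_eq_of_logits hp1 α (transpose_mul_conj_mul_eq hE hEt c _)
  refine ⟨hloss, fun c hc => ?_⟩
  have hK1 : (1 : ℝ) ≤ K := by exact_mod_cast one_le_two.trans hK
  have hx : 0 ≤ ((K : ℝ) - 1) * exp (-(2 * c)) := mul_nonneg (by linarith) (exp_pos _).le
  have hlog : log (1 + ((K : ℝ) - 1) * exp (-(2 * c))) ≤ ((K : ℝ) - 1) * exp (-(2 * c)) := by
    simpa using log_le_sub_one_of_pos (by linarith : 0 < 1 + ((K : ℝ) - 1) * exp (-(2 * c)))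
  have hnoise : 2 * α * c * ((K : ℝ) - 1) / K ≤ 2 * α * c := by
    rw [div_le_iff₀ (by linarith)]
    nlinarith [mul_nonneg hα0 hc]
  rw [hloss]
  linarith

theorem stmt16 {K : ℕ} (hK : 2 ≤ K) (α : ℝ) (hα0 : 0 ≤ α) (hα1 : α < 1)
    (E Et : Matrix (Fin K) (Fin K) ℝ)
    (hE : Eᵀ * E = 1) (hEt : Etᵀ * Et = 1)
    (p : Fin K → ℝ) (hp : ∀ j, 0 < p j) (hp1 : ∑ j, p j = 1) :
    (∀ c : ℝ,
      lossNoisy E Et p α (c • (Et * ((2 : ℝ) • 1 - allOnes K) * Eᵀ))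
        = Real.log (1 + (K - 1) * Real.exp (-(2 * c))) + 2 * α * c * (K - 1) / K) ∧
    (∀ c : ℝ, 0 ≤ c →
      lossNoisy E Et p α (c • (Et * ((2 : ℝ) • 1 - allOnes K) * Eᵀ))
        ≤ (K - 1) * Real.exp (-(2 * c)) + 2 * α * c) :=
  stmt16_general hK α hα0 E Et hE hEt p hp1
end

section
/- Let K ≥ 2 and α ∈ (0,1). Suppose V is a real K×K matrix whose j-th column has diagonal entry V_{j,j} = d and constant off-diagonal entries V_{i,j} = e for all i ≠ j, and set Δ = d − e. Then the sub-task loss ℓ_j(V) := −∑_{i=1}^K p_{i|j} · log( exp(V_{i,j}) / ∑_{l} exp(V_{l,j}) ) satisfies the exact identity ℓ_j(V) = −(1−α+α/K)·Δ + log(exp(Δ) + K − 1). Moreover, the function Δ ↦ −(1−α+α/K)·Δ + log(e^Δ + K − 1) attains its global minimum over ℝ at Δ* = log(K·(1−α+α/K)/α), and its minimum value equals L* = −(1−α+α/K)·log(1−α+α/K) − (α(K−1)/K)·log(α/K). -/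
/-!
Writing `β = 1 - α + α / K`, the loss is `log (∑ exp) - ∑ p v` because `p` sums to one, and for a
column that is symmetric across incorrect classes this collapses to `-β Δ + log (exp Δ + K - 1)`.
Concavity of `log`, applied to `exp Δ + c = β (exp Δ / β) + (1 - β) (c / (1 - β))`, bounds this
from below by `-β log β - (1 - β) log ((1 - β) / c)`, with equality when `exp Δ / β = c / (1 - β)`.
-/

open Real

/-- The sub-task loss as a function of the margin `Δ`:
`h(Δ) = −(1−α+α/K)·Δ + log(exp Δ + K − 1)`. -/
noncomputable def hMargin (K : ℕ) (α Δ : ℝ) : ℝ :=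
  -(1 - α + α / K) * Δ + Real.log (Real.exp Δ + K - 1)

theorem Fintype.sum_eq_add_mul_of_forall_ne {ι R : Type*} [Fintype ι] [Ring R] {f : ι → R}
    {c : R} (j : ι) (hf : ∀ i, i ≠ j → f i = c) :
    ∑ i, f i = f j + ((Fintype.card ι : R) - 1) * c := by
  classical
  rw [Fintype.sum_eq_add_sum_compl j f, Finset.sum_congr rfl fun i hi => hf i (by simpa using hi),
    Finset.sum_const, Finset.card_compl, Finset.card_singleton, nsmul_eq_mul,
    Nat.cast_sub (Fintype.card_pos_iff.mpr ⟨j⟩), Nat.cast_one]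

theorem neg_sum_mul_log_softmax {ι : Type*} [Fintype ι] (p v : ι → ℝ) (hp : ∑ i, p i = 1) :
    -∑ i, p i * log (exp (v i) / ∑ l, exp (v l)) = log (∑ l, exp (v l)) - ∑ i, p i * v i := by
  have : Nonempty ι := by
    by_contra h
    simp [not_nonempty_iff.mp h] at hp
  have hS : ∑ l, exp (v l) ≠ 0 :=
    (Finset.sum_pos (fun l _ => exp_pos (v l)) Finset.univ_nonempty).ne'
  simp only [log_div (exp_ne_zero _) hS, log_exp, mul_sub, Finset.sum_sub_distrib,
    ← Finset.sum_mul, hp]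
  ring

theorem neg_sum_pcond_mul_log_softmax {K : ℕ} (α : ℝ) (v : Fin K → ℝ) (j : Fin K) {d e : ℝ}
    (hd : v j = d) (he : ∀ i, i ≠ j → v i = e) :
    -∑ i, pcond K α i j * log (exp (v i) / ∑ l, exp (v l)) = hMargin K α (d - e) := by
  have hK : (K : ℝ) ≠ 0 := by exact_mod_cast j.pos.ne'
  have hpj : pcond K α j j = 1 - α + α / K := if_pos rfl
  have hpi : ∀ i, i ≠ j → pcond K α i j = α / K := fun i hi => if_neg hi
  have hp : ∑ i, pcond K α i j = 1 := by
    rw [Fintype.sum_eq_add_mul_of_forall_ne j hpi, hpj, Fintype.card_fin]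
    field_simp
    ring
  have hexp : ∑ l, exp (v l) = exp e * (exp (d - e) + K - 1) := by
    rw [Fintype.sum_eq_add_mul_of_forall_ne (c := exp e) j fun i hi => by rw [he i hi], hd,
      Fintype.card_fin, ← add_sub_cancel e d, exp_add, add_sub_cancel_left]
    ring
  have hlin : ∑ i, pcond K α i j * v i = (1 - α + α / K) * d + (K - 1) * (α / K * e) := by
    rw [Fintype.sum_eq_add_mul_of_forall_ne j fun i hi => by rw [hpi i hi, he i hi], hpj, hd,
      Fintype.card_fin]
  have hpos : 0 < exp (d - e) + K - 1 := by
    have : (1 : ℝ) ≤ K := by exact_mod_cast j.pos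
    linarith [exp_pos (d - e)]
  rw [neg_sum_mul_log_softmax _ v hp, hexp, log_mul (exp_ne_zero e) hpos.ne', log_exp, hlin,
    hMargin]
  field_simp
  ring

theorem le_neg_mul_add_log_exp_add {β c : ℝ} (hβ0 : 0 < β) (hβ1 : β < 1) (hc : 0 < c)
    (Δ : ℝ) :
    -β * log β - (1 - β) * log ((1 - β) / c) ≤ -β * Δ + log (exp Δ + c) := by
  have hβ1' : 0 < 1 - β := sub_pos.mpr hβ1
  have jensen := strictConcaveOn_log_Ioi.concaveOn.2 (Set.mem_Ioi.mpr (div_pos (exp_pos Δ) hβ0))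
    (Set.mem_Ioi.mpr (div_pos hc hβ1')) hβ0.le hβ1'.le (add_sub_cancel β 1)
  simp only [smul_eq_mul, mul_div_cancel₀ _ hβ0.ne', mul_div_cancel₀ _ hβ1'.ne'] at jensen
  rw [log_div (exp_ne_zero Δ) hβ0.ne', log_exp, log_div hc.ne' hβ1'.ne'] at jensen
  rw [log_div hβ1'.ne' hc.ne']
  linarith

theorem neg_mul_add_log_exp_add_of_eq_log {β c Δ : ℝ} (hβ0 : 0 < β) (hβ1 : β < 1)
    (hc : 0 < c) (hΔ : Δ = log (β * c / (1 - β))) :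
    -β * Δ + log (exp Δ + c) = -β * log β - (1 - β) * log ((1 - β) / c) := by
  have hβ1' : 0 < 1 - β := sub_pos.mpr hβ1
  have hsum : exp Δ + c = c / (1 - β) := by
    rw [hΔ, exp_log (by positivity)]
    field_simp
    ring
  rw [hsum, hΔ, log_div (by positivity) hβ1'.ne', log_mul hβ0.ne' hc.ne',
    log_div hc.ne' hβ1'.ne', log_div hβ1'.ne' hc.ne']
  ring

theorem stmt19 {K : ℕ} (hK : 2 ≤ K) (α : ℝ) (hα0 : 0 < α) (hα1 : α < 1)
    (V : Matrix (Fin K) (Fin K) ℝ) (j : Fin K) (d e : ℝ)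
    (hd : V j j = d) (he : ∀ i, i ≠ j → V i j = e) :
    (-∑ i, pcond K α i j * Real.log (Real.exp (V i j) / ∑ l, Real.exp (V l j))
        = hMargin K α (d - e)) ∧
    (∀ Δ : ℝ, hMargin K α (Real.log (K * (1 - α + α / K) / α)) ≤ hMargin K α Δ) ∧
    hMargin K α (Real.log (K * (1 - α + α / K) / α))
        = -(1 - α + α / K) * Real.log (1 - α + α / K)
          - (α * (K - 1) / K) * Real.log (α / K) := by
  have hK1 : (1 : ℝ) < K := by exact_mod_cast hK
  set β := 1 - α + α / K with hβ
  have hcompl : 1 - β = α * (K - 1) / K := by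
    rw [hβ]
    field_simp
    ring
  have hc : (0 : ℝ) < K - 1 := sub_pos.mpr hK1
  have hβ1 : β < 1 := by
    have : 0 < α * (K - 1) / K := by positivity
    linarith
  have hβ0 : 0 < β := by
    have : 0 < α / K := by positivity
    linarith
  have hmargin (Δ : ℝ) : hMargin K α Δ = -β * Δ + log (exp Δ + (K - 1)) := by
    rw [hMargin, add_sub_assoc]
  have hopt : log (K * β / α) = log (β * (K - 1) / (1 - β)) := by
    rw [hcompl]
    field_simp
  have hmin := neg_mul_add_log_exp_add_of_eq_log hβ0 hβ1 hc hopt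
  refine ⟨neg_sum_pcond_mul_log_softmax α (fun i => V i j) j hd he, fun Δ => ?_, ?_⟩
  · rw [hmargin, hmargin, hmin]
    exact le_neg_mul_add_log_exp_add hβ0 hβ1 hc Δ
  · rw [hmargin, hmin, hcompl]
    congr 2
    field_simp
end
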